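/- arXiv:2306.09865 — 6 statements merged into one kernel-verified Lean document; each statement's English description precedes it below -/
import Mathlib

section
/- Let n, k, m, p be positive integers, Q₀, Q₁,…,Q_m symmetric n×n real matrices, d ∈ ℝ^m, a₁,…,a_p ∈ ℝⁿ and b₁,…,b_p ∈ ℝ with b_i ≥ 0. Call P ∈ {0,1}^{n×k} QMP₁-feasible if P1_k ≤ 1_n, tr(PᵀQ_iP) + d_i ≤ 0 for all i ∈ {1,…,m}, and Pᵀa_i ≤ b_i 1_k for all i ∈ {1,…,p}. Call a symmetric matrix X ∈ {0,1}^{n×n} with x := diag(X) BSDP-feasible if ⟨Q_i, X⟩ + d_i ≤ 0 for all i ∈ {1,…,m}, X a_i ≤ b_i x (entrywise) for all i ∈ {1,…,p}, and the (n+1)×(n+1) block matrix with top-left entry k, top-right block xᵀ, bottom-left block x and bottom-right block X is PSD. Then: (a) if P is QMP₁-feasible then X = PPᵀ is BSDP-feasible with ⟨Q₀, PPᵀ⟩ = tr(PᵀQ₀P); (b) if X is BSDP-feasible then there exists a QMP₁-feasible P with X = PPᵀ. In particular the two programs have the same optimal value. -/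
open Matrix

/-- The `(n+1) × (n+1)` block matrix with top-left `1×1` block equal to the scalar `c`,
top-right block `xᵀ`, bottom-left block `x`, and bottom-right block `X`. -/
def cornerBlock {n : ℕ} (c : ℝ) (x : Fin n → ℝ) (X : Matrix (Fin n) (Fin n) ℝ) :
    Matrix (Fin 1 ⊕ Fin n) (Fin 1 ⊕ Fin n) ℝ :=
  Matrix.fromBlocks (Matrix.of fun (_ : Fin 1) (_ : Fin 1) => c)
    (Matrix.of fun (_ : Fin 1) j => x j)
    (Matrix.of fun i (_ : Fin 1) => x i) X

/-- Feasibility for the binary quadratic matrix program `QMP₁`: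
`P ∈ {0,1}^{n×k}`, `P 1_k ≤ 1_n`, `tr(Pᵀ Q_i P) + d_i ≤ 0` for `i ∈ [m]`,
and `Pᵀ a_i ≤ b_i 1_k` for `i ∈ [p]`. -/
def QMP1feasible {n k : ℕ} (m p : ℕ) (Qs : Fin m → Matrix (Fin n) (Fin n) ℝ)
    (d : Fin m → ℝ) (a : Fin p → Fin n → ℝ) (b : Fin p → ℝ)
    (P : Matrix (Fin n) (Fin k) ℝ) : Prop :=
  (∀ i j, P i j = 0 ∨ P i j = 1) ∧
  (∀ i, P.mulVec (fun _ => 1) i ≤ 1) ∧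
  (∀ i : Fin m, (Pᵀ * Qs i * P).trace + d i ≤ 0) ∧
  (∀ i : Fin p, ∀ j : Fin k, Pᵀ.mulVec (a i) j ≤ b i)

/-- Feasibility for the corresponding binary semidefinite program:
`X ∈ {0,1}^{n×n}` symmetric with `x := diag X`, `⟨Q_i, X⟩ + d_i ≤ 0`, `X a_i ≤ b_i x`
entrywise, and the block matrix `[[k, xᵀ], [x, X]]` PSD. -/
def BSDP1feasible {n : ℕ} (k m p : ℕ) (Qs : Fin m → Matrix (Fin n) (Fin n) ℝ)
    (d : Fin m → ℝ) (a : Fin p → Fin n → ℝ) (b : Fin p → ℝ)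
    (X : Matrix (Fin n) (Fin n) ℝ) : Prop :=
  X.IsSymm ∧ (∀ i j, X i j = 0 ∨ X i j = 1) ∧
  (∀ i : Fin m, ((Qs i)ᵀ * X).trace + d i ≤ 0) ∧
  (∀ i : Fin p, ∀ j : Fin n, X.mulVec (a i) j ≤ b i * X.diag j) ∧
  (cornerBlock (k : ℝ) X.diag X).PosSemidef

lemma quad3 {n : ℕ} {M : Matrix (Fin n) (Fin n) ℝ} (hM : M.PosSemidef)
    (i j l : Fin n) (c1 c2 c3 : ℝ) :
    0 ≤ c1*c1*M i i + c1*c2*M i j + c1*c3*M i l + c2*c1*M j i + c2*c2*M j j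
      + c2*c3*M j l + c3*c1*M l i + c3*c2*M l j + c3*c3*M l l := by
  have h := hM.dotProduct_mulVec_nonneg (c1 • (Pi.single i 1 : Fin n → ℝ) + c2 • (Pi.single j 1 : Fin n → ℝ)
    + c3 • (Pi.single l 1 : Fin n → ℝ))
  simp only [mulVec_add, mulVec_smul, mulVec_single, star_trivial, dotProduct_add,
    add_dotProduct, smul_dotProduct, dotProduct_smul, single_dotProduct, smul_eq_mul,
    Pi.add_apply, Pi.smul_apply, mul_one, col_apply, op_smul_eq_mul, one_mul] at h
  linarith
lemma Xpsd {n : ℕ} {X : Matrix (Fin n) (Fin n) ℝ} {c : ℝ}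
    (h : (cornerBlock c X.diag X).PosSemidef) : X.PosSemidef := by
  have := h.submatrix Sum.inr
  convert this using 1
  ext i j; rfl
lemma bin_diag_one {n : ℕ} {X : Matrix (Fin n) (Fin n) ℝ} (hsym : X.IsSymm)
    (hbin : ∀ i j, X i j = 0 ∨ X i j = 1) (hpsd : X.PosSemidef)
    {i j : Fin n} (hij : X i j = 1) : X i i = 1 := by
  have hji : X j i = 1 := (hsym.apply i j).trans hij
  rcases hbin i i with hii | hii
  · exfalso
    have h := quad3 hpsd i j i 1 (-1) 0
    rcases hbin j j with hjj | hjj <;>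
      simp only [hii, hij, hji, hjj] at h <;> linarith
  · exact hii
lemma bin_trans_one {n : ℕ} {X : Matrix (Fin n) (Fin n) ℝ} (hsym : X.IsSymm)
    (hbin : ∀ i j, X i j = 0 ∨ X i j = 1) (hpsd : X.PosSemidef)
    {i j l : Fin n} (hij : X i j = 1) (hjl : X j l = 1) : X i l = 1 := by
  rcases hbin i l with hil | hil
  · exfalso
    have hji : X j i = 1 := (hsym.apply i j).trans hij
    have hlj : X l j = 1 := (hsym.apply j l).trans hjl
    have hli : X l i = 0 := (hsym.apply i l).trans hil
    have hii := bin_diag_one hsym hbin hpsd hij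
    have hjj := bin_diag_one hsym hbin hpsd hji
    have hll := bin_diag_one hsym hbin hpsd hlj
    have h := quad3 hpsd i j l 1 (-1) 1
    simp only [hii, hij, hil, hji, hjj, hjl, hli, hlj, hll] at h
    linarith
  · exact hil
open scoped Classical in
noncomputable def repOf {n : ℕ} (X : Matrix (Fin n) (Fin n) ℝ) (i : Fin n) : Fin n :=
  if h : (Finset.univ.filter fun j => X i j = 1).Nonempty
  then (Finset.univ.filter fun j => X i j = 1).min' h else i
lemma row_eq {n : ℕ} {X : Matrix (Fin n) (Fin n) ℝ} (hsym : X.IsSymm)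
    (hbin : ∀ i j, X i j = 0 ∨ X i j = 1) (hpsd : X.PosSemidef)
    {i j : Fin n} (hij : X i j = 1) : ∀ l, X i l = X j l := by
  intro l
  have hji : X j i = 1 := (hsym.apply i j).trans hij
  rcases hbin i l with h | h <;> rcases hbin j l with h' | h'
  · rw [h, h']
  · exact absurd (bin_trans_one hsym hbin hpsd hij h') (by rw [h]; norm_num)
  · exact absurd (bin_trans_one hsym hbin hpsd hji h) (by rw [h']; norm_num)
  · rw [h, h']
lemma rep_mem {n : ℕ} {X : Matrix (Fin n) (Fin n) ℝ}
    {i : Fin n} (hii : X i i = 1) : X i (repOf X i) = 1 := by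
  classical
  have hne : (Finset.univ.filter fun j => X i j = 1).Nonempty := ⟨i, by simp [hii]⟩
  have : repOf X i ∈ Finset.univ.filter fun j => X i j = 1 := by
    rw [repOf, dif_pos hne]
    exact Finset.min'_mem _ _
  simpa using this
lemma rep_eq {n : ℕ} {X : Matrix (Fin n) (Fin n) ℝ} (hsym : X.IsSymm)
    (hbin : ∀ i j, X i j = 0 ∨ X i j = 1) (hpsd : X.PosSemidef)
    {i j : Fin n} (hij : X i j = 1) : repOf X i = repOf X j := by
  classical
  have h := row_eq hsym hbin hpsd hij
  have hs : (Finset.univ.filter fun l => X i l = 1) = (Finset.univ.filter fun l => X j l = 1) := by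
    ext l; simp [h l]
  have hne : (Finset.univ.filter fun l => X i l = 1).Nonempty := ⟨j, by simp [hij]⟩
  have hne' : (Finset.univ.filter fun l => X j l = 1).Nonempty := hs ▸ hne
  rw [repOf, repOf, dif_pos hne, dif_pos hne']
  apply le_antisymm
  · exact Finset.min'_le _ _ (by rw [hs]; exact Finset.min'_mem _ hne')
  · exact Finset.min'_le _ _ (by rw [← hs]; exact Finset.min'_mem _ hne)
lemma key {n : ℕ} {X : Matrix (Fin n) (Fin n) ℝ} (hsym : X.IsSymm)
    (hbin : ∀ i j, X i j = 0 ∨ X i j = 1) (hpsd : X.PosSemidef)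
    {i : Fin n} (hii : X i i = 1) (j : Fin n) :
    X i j = 1 ↔ (X j j = 1 ∧ repOf X j = repOf X i) := by
  constructor
  · intro hij
    have hji : X j i = 1 := (hsym.apply i j).trans hij
    exact ⟨bin_diag_one hsym hbin hpsd hji, rep_eq hsym hbin hpsd hji⟩
  · rintro ⟨hjj, hrep⟩
    have h1 : X i (repOf X i) = 1 := rep_mem hii
    have h2 : X j (repOf X i) = 1 := hrep ▸ rep_mem hjj
    have h3 : X (repOf X i) j = 1 := (hsym.apply j (repOf X i)).trans h2
    exact bin_trans_one hsym hbin hpsd h1 h3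
open scoped Classical in
lemma count_le {n k : ℕ} {X : Matrix (Fin n) (Fin n) ℝ} (hsym : X.IsSymm)
    (hbin : ∀ i j, X i j = 0 ∨ X i j = 1)
    (hpsd : (cornerBlock (k : ℝ) X.diag X).PosSemidef) :
    ((Finset.univ.filter fun i => X i i = 1 ∧ repOf X i = i).card : ℝ) ≤ k := by
  have hXp : X.PosSemidef := Xpsd hpsd
  set c : Fin n → ℕ := fun i => (Finset.univ.filter fun j => X i j = 1).card with hc
  set y : Fin n → ℝ := fun i => if X i i = 1 then ((c i : ℝ))⁻¹ else 0 with hy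
  set R : Finset (Fin n) := Finset.univ.filter fun i => X i i = 1 ∧ repOf X i = i with hR
  have f1 : ∀ i, X i i = 1 → 0 < c i := fun i hii =>
    Finset.card_pos.2 ⟨i, by simp [hii]⟩
  have f2 : ∀ i j, X i j = 1 → c i = c j := by
    intro i j hij
    have h := row_eq hsym hbin hXp hij
    simp only [hc]
    congr 1
    ext l; simp [h l]
  -- each "row sum of y over class of i" is 1
  have f4 : ∀ i, X i i = 1 → X.mulVec y i = 1 := by
    intro i hii
    have : X.mulVec y i = ∑ j, if X i j = 1 then ((c i : ℝ))⁻¹ else 0 := by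
      rw [Matrix.mulVec, dotProduct]
      refine Finset.sum_congr rfl fun j _ => ?_
      rcases hbin i j with h | h
      · simp [h, y]
      · have hjj : X j j = 1 := bin_diag_one hsym hbin hXp ((hsym.apply i j).trans h)
        simp [h, y, hjj, f2 i j h]
    rw [this, ← Finset.sum_filter, Finset.sum_const, nsmul_eq_mul]
    exact mul_inv_cancel₀ (by exact_mod_cast (f1 i hii).ne')
  -- rows outside S are zero
  have f5 : ∀ i, X i i = 0 → X.mulVec y i = 0 := by
    intro i hii
    rw [Matrix.mulVec, dotProduct]
    refine Finset.sum_eq_zero fun j _ => ?_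
    rcases hbin i j with h | h
    · simp [h]
    · exact absurd (bin_diag_one hsym hbin hXp h) (by rw [hii]; norm_num)
  set r : ℝ := ∑ i ∈ Finset.univ.filter (fun i => X i i = 1), ((c i : ℝ))⁻¹ with hr
  -- xᵀ y = r
  have f6 : X.diag ⬝ᵥ y = r := by
    rw [dotProduct, hr, Finset.sum_filter]
    refine Finset.sum_congr rfl fun i _ => ?_
    rcases hbin i i with h | h <;> simp [Matrix.diag, h, y]
  -- yᵀ X y = r
  have f7 : y ⬝ᵥ X.mulVec y = r := by
    rw [dotProduct, hr, Finset.sum_filter]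
    refine Finset.sum_congr rfl fun i _ => ?_
    rcases hbin i i with h | h
    · simp [y, h]
    · simp [y, h, f4 i h]
  -- r = R.card
  have f8 : r = (R.card : ℝ) := by
    have hmaps : ∀ i ∈ Finset.univ.filter (fun i => X i i = 1), repOf X i ∈ R := by
      intro i hi
      simp only [Finset.mem_filter, Finset.mem_univ, true_and] at hi
      have h1 : X i (repOf X i) = 1 := rep_mem hi
      have h2 : X (repOf X i) i = 1 := (hsym.apply i (repOf X i)).trans h1
      rw [hR]
      exact Finset.mem_filter.2 ⟨Finset.mem_univ _,
        bin_diag_one hsym hbin hXp h2, (rep_eq hsym hbin hXp h1).symm⟩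
    have hinner : ∀ t ∈ R, (∑ i ∈ (Finset.univ.filter (fun i => X i i = 1)).filter
        (fun i => repOf X i = t), ((c i : ℝ))⁻¹) = 1 := by
      intro t ht
      rw [hR] at ht
      simp only [Finset.mem_filter, Finset.mem_univ, true_and] at ht
      obtain ⟨htt, hrt⟩ := ht
      have hsetswap : (Finset.univ.filter (fun i => X i i = 1)).filter (fun i => repOf X i = t)
          = Finset.univ.filter fun j => X t j = 1 := by
        ext j
        simp only [Finset.mem_filter, Finset.mem_univ, true_and, Finset.filter_filter]
        rw [key hsym hbin hXp htt j, hrt]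
      rw [hsetswap]
      have hconst : ∀ j ∈ Finset.univ.filter (fun j => X t j = 1), ((c j : ℝ))⁻¹ = ((c t : ℝ))⁻¹ := by
        intro j hj
        simp only [Finset.mem_filter, Finset.mem_univ, true_and] at hj
        rw [f2 t j hj]
      rw [Finset.sum_congr rfl hconst, Finset.sum_const, nsmul_eq_mul]
      exact mul_inv_cancel₀ (by exact_mod_cast (f1 t htt).ne')
    rw [hr, ← Finset.sum_fiberwise_of_maps_to hmaps,
      Finset.sum_congr rfl hinner, Finset.sum_const, nsmul_eq_mul, mul_one]
  -- final PSD computation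
  have h := hpsd.dotProduct_mulVec_nonneg ((fun _ => (-1:ℝ)) ⊕ᵥ y)
  rw [show star ((fun _ => (-1:ℝ)) ⊕ᵥ y) = ((fun _ => (-1:ℝ)) ⊕ᵥ y) from star_trivial _] at h
  rw [cornerBlock, fromBlocks_mulVec, sumElim_dotProduct_sumElim] at h
  simp only [Sum.elim_comp_inl, Sum.elim_comp_inr] at h
  have e1 : ((Matrix.of fun (_ : Fin 1) (_ : Fin 1) => (k:ℝ)) *ᵥ fun _ => -1)
      = fun _ => -(k:ℝ) := by
    funext s; simp [Matrix.mulVec, dotProduct]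
  have e2 : ((Matrix.of fun (_ : Fin 1) j => X.diag j) *ᵥ y) = fun _ => r := by
    funext s; rw [← f6]; rfl
  have e3 : ((Matrix.of fun i (_ : Fin 1) => X.diag i) *ᵥ fun _ => -1)
      = fun i => -X.diag i := by
    funext i; simp [Matrix.mulVec, dotProduct]
  rw [e1, e2, e3] at h
  have e4 : (fun (_ : Fin 1) => (-1:ℝ)) ⬝ᵥ ((fun _ => -(k:ℝ)) + fun _ => r)
      = (k:ℝ) - r := by
    simp [dotProduct, Fin.sum_univ_one]
    ring
  have e5 : y ⬝ᵥ ((fun i => -X.diag i) + X *ᵥ y) = -r + r := by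
    rw [dotProduct_add, f7]
    congr 1
    rw [← f6, dotProduct_comm]
    simp [dotProduct, Finset.sum_neg_distrib]
  rw [e4, e5] at h
  rw [← f8]
  linarith
lemma traceHelper {n k : ℕ} (Q : Matrix (Fin n) (Fin n) ℝ) (hQ : Q.IsSymm)
    (P : Matrix (Fin n) (Fin k) ℝ) :
    (Pᵀ * Q * P).trace = (Qᵀ * (P * Pᵀ)).trace := by
  rw [hQ, trace_mul_cycle, trace_mul_comm]
open scoped Classical in
lemma partb {n k m p : ℕ} (hk : 0 < k) (Qs : Fin m → Matrix (Fin n) (Fin n) ℝ)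
    (hQs : ∀ i, (Qs i).IsSymm) (d : Fin m → ℝ) (a : Fin p → Fin n → ℝ) (b : Fin p → ℝ)
    (hb : ∀ i, 0 ≤ b i) (X : Matrix (Fin n) (Fin n) ℝ)
    (hX : BSDP1feasible k m p Qs d a b X) :
    ∃ P : Matrix (Fin n) (Fin k) ℝ, QMP1feasible m p Qs d a b P ∧ X = P * Pᵀ := by
  obtain ⟨hsym, hbin, htr, hmv, hpsd⟩ := hX
  have hXp : X.PosSemidef := Xpsd hpsd
  set R : Finset (Fin n) := Finset.univ.filter fun i => X i i = 1 ∧ repOf X i = i with hR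
  -- embedding of R into Fin k
  have hcard : R.card ≤ k := by
    have := count_le hsym hbin hpsd
    rw [hR]; exact_mod_cast this
  have hemb : Nonempty (↥R ↪ Fin k) := by
    rw [Function.Embedding.nonempty_iff_card_le, Fintype.card_coe, Fintype.card_fin]
    exact hcard
  obtain ⟨ι⟩ := hemb
  have hrepR : ∀ i, X i i = 1 → repOf X i ∈ R := by
    intro i hi
    have h1 : X i (repOf X i) = 1 := rep_mem hi
    have h2 : X (repOf X i) i = 1 := (hsym.apply i (repOf X i)).trans h1
    rw [hR]
    exact Finset.mem_filter.2 ⟨Finset.mem_univ _,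
      bin_diag_one hsym hbin hXp h2, (rep_eq hsym hbin hXp h1).symm⟩
  set col : Fin n → Fin k := fun i =>
    if h : X i i = 1 then ι ⟨repOf X i, hrepR i h⟩ else ⟨0, hk⟩ with hcol
  set P : Matrix (Fin n) (Fin k) ℝ :=
    Matrix.of (fun i t => if X i i = 1 ∧ col i = t then 1 else 0) with hP
  -- col equality iff rep equality, for diagonal-one indices
  have hcoleq : ∀ i j, X i i = 1 → X j j = 1 → (col i = col j ↔ repOf X i = repOf X j) := by
    intro i j hi hj
    rw [hcol]
    simp only [dif_pos hi, dif_pos hj]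
    constructor
    · intro h
      exact Subtype.mk_eq_mk.1 (ι.injective h)
    · intro h
      congr 1
      exact Subtype.ext h
  -- P entries described by X entries
  have hProw : ∀ j₀, X j₀ j₀ = 1 → repOf X j₀ = j₀ → ∀ j, P j (col j₀) = X j₀ j := by
    intro j₀ h0 hr0 j
    by_cases hj : X j j = 1 ∧ col j = col j₀
    · obtain ⟨hjj, hcj⟩ := hj
      have hre : repOf X j = repOf X j₀ := (hcoleq j j₀ hjj h0).1 hcj
      have hX1 : X j₀ j = 1 := (key hsym hbin hXp h0 j).2 ⟨hjj, hre⟩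
      rw [hP, hX1]
      simp [hjj, hcj]
    · have hX0 : X j₀ j = 0 := by
        rcases hbin j₀ j with h | h
        · exact h
        · exfalso
          obtain ⟨hjj, hre⟩ := (key hsym hbin hXp h0 j).1 h
          exact hj ⟨hjj, (hcoleq j j₀ hjj h0).2 hre⟩
      rw [hP, hX0]
      simp only [Matrix.of_apply, ite_eq_right_iff, one_ne_zero]
      intro hcontra
      exact absurd hcontra hj
  -- the matrix identity X = P * Pᵀ
  have hXPP : X = P * Pᵀ := by
    ext i j
    by_cases hi : X i i = 1
    · by_cases hj : X j j = 1
      · have hsum : (P * Pᵀ) i j = ∑ t, (if X i i = 1 ∧ col i = t then (1:ℝ) else 0)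
            * (if X j j = 1 ∧ col j = t then 1 else 0) := by
          rw [Matrix.mul_apply]; rfl
        rw [hsum]
        have hterm : ∀ t, (if X i i = 1 ∧ col i = t then (1:ℝ) else 0)
            * (if X j j = 1 ∧ col j = t then 1 else 0)
            = if col i = t ∧ col j = t then 1 else 0 := by
          intro t
          by_cases h1 : col i = t <;> by_cases h2 : col j = t <;>
            simp [h1, h2, hi, hj]
        rw [Finset.sum_congr rfl fun t _ => hterm t]
        by_cases hcc : col i = col j
        · have : ∀ t, (if col i = t ∧ col j = t then (1:ℝ) else 0) = if col i = t then 1 else 0 := by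
            intro t; by_cases h : col i = t <;> simp [h, hcc ▸ h, ← hcc]
          rw [Finset.sum_congr rfl fun t _ => this t, Finset.sum_ite_eq Finset.univ (col i) (fun _ => (1:ℝ))]
          simp only [Finset.mem_univ, if_true]
          exact (key hsym hbin hXp hi j).2 ⟨hj, ((hcoleq j i hj hi).1 hcc.symm)⟩
        · have : ∀ t, (if col i = t ∧ col j = t then (1:ℝ) else 0) = 0 := by
            intro t
            by_cases h1 : col i = t <;> by_cases h2 : col j = t <;>
              simp_all <;> exact hcc (Subtype.mk_eq_mk.1 (ι.injective (h1.trans h2.symm)))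
          rw [Finset.sum_congr rfl fun t _ => this t, Finset.sum_const_zero]
          rcases hbin i j with h | h
          · exact h
          · exfalso
            obtain ⟨hjj, hre⟩ := (key hsym hbin hXp hi j).1 h
            exact hcc ((hcoleq i j hi hj).2 hre.symm)
      · have hXij : X i j = 0 := by
          rcases hbin i j with h | h
          · exact h
          · exact absurd (bin_diag_one hsym hbin hXp ((hsym.apply i j).trans h)) (by
              rcases hbin j j with h' | h' <;> simp_all)
        have : (P * Pᵀ) i j = 0 := by
          rw [Matrix.mul_apply]
          refine Finset.sum_eq_zero fun t _ => ?_
          have : P j t = 0 := by rw [hP]; simp [hj]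
          rw [Matrix.transpose_apply, this, mul_zero]
        rw [this, hXij]
    · have hXij : X i j = 0 := by
        rcases hbin i j with h | h
        · exact h
        · exact absurd (bin_diag_one hsym hbin hXp h) hi
      have : (P * Pᵀ) i j = 0 := by
        rw [Matrix.mul_apply]
        refine Finset.sum_eq_zero fun t _ => ?_
        have : P i t = 0 := by rw [hP]; simp [hi]
        rw [this, zero_mul]
      rw [this, hXij]
  refine ⟨P, ⟨?_, ?_, ?_, ?_⟩, hXPP⟩
  · -- binary
    intro i t
    rw [hP]
    by_cases h : X i i = 1 ∧ col i = t <;> simp [h]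
  · -- row sums ≤ 1
    intro i
    rw [Matrix.mulVec, dotProduct]
    by_cases hi : X i i = 1
    · have : ∀ t, P i t * 1 = if col i = t then (1:ℝ) else 0 := by
        intro t; rw [hP]; by_cases h : col i = t <;> simp [h, hi]
      rw [Finset.sum_congr rfl fun t _ => this t,
        Finset.sum_ite_eq Finset.univ (col i) (fun _ => (1:ℝ))]
      simp
    · have : ∀ t, P i t * 1 = 0 := by
        intro t; rw [hP]; simp [hi]
      rw [Finset.sum_congr rfl fun t _ => this t, Finset.sum_const_zero]
      norm_num
  · -- trace constraints
    intro i
    rw [traceHelper _ (hQs i), ← hXPP]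
    exact htr i
  · -- linear constraints
    intro i t
    by_cases hex : ∃ j₀, X j₀ j₀ = 1 ∧ repOf X j₀ = j₀ ∧ col j₀ = t
    · obtain ⟨j₀, h0, hr0, hct⟩ := hex
      have : Pᵀ.mulVec (a i) t = X.mulVec (a i) j₀ := by
        rw [Matrix.mulVec, Matrix.mulVec, dotProduct, dotProduct]
        refine Finset.sum_congr rfl fun j _ => ?_
        rw [Matrix.transpose_apply, ← hct, hProw j₀ h0 hr0 j]
      rw [this]
      calc X.mulVec (a i) j₀ ≤ b i * X.diag j₀ := hmv i j₀
        _ = b i := by rw [Matrix.diag, h0, mul_one]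
    · have : Pᵀ.mulVec (a i) t = 0 := by
        rw [Matrix.mulVec, dotProduct]
        refine Finset.sum_eq_zero fun j _ => ?_
        have hPjt : P j t = 0 := by
          rw [hP]
          simp only [Matrix.of_apply, ite_eq_right_iff, one_ne_zero]
          rintro ⟨hjj, hcj⟩
          refine hex ⟨repOf X j, ?_, ?_, ?_⟩
          · have h1 : X j (repOf X j) = 1 := rep_mem hjj
            exact bin_diag_one hsym hbin hXp ((hsym.apply j (repOf X j)).trans h1)
          · exact (rep_eq hsym hbin hXp (rep_mem hjj)).symm
          · rw [← hcj]
            have hrr : X (repOf X j) (repOf X j) = 1 := by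
              have h1 : X j (repOf X j) = 1 := rep_mem hjj
              exact bin_diag_one hsym hbin hXp ((hsym.apply j (repOf X j)).trans h1)
            exact ((hcoleq (repOf X j) j hrr hjj).2
              (rep_eq hsym hbin hXp (rep_mem hjj)).symm)
        rw [Matrix.transpose_apply, hPjt, zero_mul]
      rw [this]
      exact hb i
lemma cornerPSD {n k : ℕ} (P : Matrix (Fin n) (Fin k) ℝ)
    (hbin : ∀ i j, P i j = 0 ∨ P i j = 1) :
    (cornerBlock (k : ℝ) (P * Pᵀ).diag (P * Pᵀ)).PosSemidef := by
  set B : Matrix (Fin 1 ⊕ Fin n) (Fin k) ℝ :=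
    Matrix.of fun s t => Sum.elim (fun _ => (1:ℝ)) (fun i => P i t) s with hB
  have hsq : ∀ i t, P i t * P i t = P i t := by
    intro i t; rcases hbin i t with h | h <;> rw [h] <;> ring
  have key : cornerBlock (k : ℝ) (P * Pᵀ).diag (P * Pᵀ) = B * Bᴴ := by
    ext s t
    rcases s with s | s <;> rcases t with t | t <;>
      simp [cornerBlock, fromBlocks, B, Matrix.mul_apply, Matrix.diag, conjTranspose_apply, hsq]
  rw [key]
  exact posSemidef_self_mul_conjTranspose B
open scoped Classical in
lemma entry01 {n k : ℕ} (P : Matrix (Fin n) (Fin k) ℝ)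
    (hbin : ∀ i j, P i j = 0 ∨ P i j = 1)
    (hrow : ∀ i, P.mulVec (fun _ => 1) i ≤ 1) (i j : Fin n) :
    (P * Pᵀ) i j = 0 ∨ (P * Pᵀ) i j = 1 := by
  have hentry : (P * Pᵀ) i j
      = ((Finset.univ.filter fun t => P i t = 1 ∧ P j t = 1).card : ℝ) := by
    rw [Matrix.mul_apply, ← Finset.sum_boole]
    refine Finset.sum_congr rfl fun t _ => ?_
    rcases hbin i t with h | h <;> rcases hbin j t with h' | h' <;>
      simp [transpose_apply, h, h']
  have hrowsum : P.mulVec (fun _ => 1) i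
      = ((Finset.univ.filter fun t => P i t = 1).card : ℝ) := by
    rw [Matrix.mulVec, dotProduct, ← Finset.sum_boole]
    refine Finset.sum_congr rfl fun t _ => ?_
    rcases hbin i t with h | h <;> simp [h]
  have h1 : ((Finset.univ.filter fun t => P i t = 1).card : ℝ) ≤ 1 := hrowsum ▸ hrow i
  have h1' : (Finset.univ.filter fun t => P i t = 1).card ≤ 1 := by exact_mod_cast h1
  have hsub : (Finset.univ.filter fun t => P i t = 1 ∧ P j t = 1).card
      ≤ (Finset.univ.filter fun t => P i t = 1).card :=
    Finset.card_le_card (by intro t ht; simp only [Finset.mem_filter] at *; exact ⟨ht.1, ht.2.1⟩)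
  have hle : (Finset.univ.filter fun t => P i t = 1 ∧ P j t = 1).card ≤ 1 := le_trans hsub h1'
  interval_cases h : (Finset.univ.filter fun t => P i t = 1 ∧ P j t = 1).card
  · left; rw [hentry]; norm_num
  · right; rw [hentry]; norm_num
lemma parta {n k m p : ℕ} (Qs : Fin m → Matrix (Fin n) (Fin n) ℝ)
    (hQs : ∀ i, (Qs i).IsSymm) (d : Fin m → ℝ) (a : Fin p → Fin n → ℝ) (b : Fin p → ℝ)
    (P : Matrix (Fin n) (Fin k) ℝ) (hP : QMP1feasible m p Qs d a b P) :
    BSDP1feasible k m p Qs d a b (P * Pᵀ) := by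
  obtain ⟨hbin, hrow, htr, hlin⟩ := hP
  have hP0 : ∀ i t, 0 ≤ P i t := by
    intro i t; rcases hbin i t with h | h <;> rw [h] <;> norm_num
  have hsq : ∀ i t, P i t * P i t = P i t := by
    intro i t; rcases hbin i t with h | h <;> rw [h] <;> ring
  refine ⟨by rw [Matrix.IsSymm, transpose_mul, transpose_transpose],
    entry01 P hbin hrow, ?_, ?_, cornerPSD P hbin⟩
  · intro i
    rw [← traceHelper _ (hQs i)]
    exact htr i
  · intro i j
    have hdiag : (P * Pᵀ).diag j = ∑ t, P j t := by
      simp [Matrix.diag, Matrix.mul_apply, hsq]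
    rw [← Matrix.mulVec_mulVec, hdiag]
    calc P.mulVec (Pᵀ.mulVec (a i)) j = ∑ t, P j t * Pᵀ.mulVec (a i) t := rfl
      _ ≤ ∑ t, P j t * b i := Finset.sum_le_sum fun t _ =>
          mul_le_mul_of_nonneg_left (hlin i t) (hP0 j t)
      _ = b i * ∑ t, P j t := by
          rw [Finset.mul_sum]; exact Finset.sum_congr rfl fun t _ => mul_comm _ _

/-- Equivalence of the binary quadratic matrix program `QMP₁` and its BSDP reformulation:
(a) a `QMP₁`-feasible `P` yields the BSDP-feasible matrix `X = P Pᵀ` with the same objective;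
(b) every BSDP-feasible `X` is of the form `P Pᵀ` for some `QMP₁`-feasible `P`;
consequently the two programs have the same attained objective values and optimal value. -/
theorem stmt13 (n k m p : ℕ) (hn : 0 < n) (hk : 0 < k) (hm : 0 < m) (hp : 0 < p)
    (Q0 : Matrix (Fin n) (Fin n) ℝ) (hQ0 : Q0.IsSymm)
    (Qs : Fin m → Matrix (Fin n) (Fin n) ℝ) (hQs : ∀ i, (Qs i).IsSymm)
    (d : Fin m → ℝ) (a : Fin p → Fin n → ℝ) (b : Fin p → ℝ) (hb : ∀ i, 0 ≤ b i) :
    (∀ P : Matrix (Fin n) (Fin k) ℝ, QMP1feasible m p Qs d a b P →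
      BSDP1feasible k m p Qs d a b (P * Pᵀ) ∧
      (Q0ᵀ * (P * Pᵀ)).trace = (Pᵀ * Q0 * P).trace) ∧
    (∀ X : Matrix (Fin n) (Fin n) ℝ, BSDP1feasible k m p Qs d a b X →
      ∃ P : Matrix (Fin n) (Fin k) ℝ, QMP1feasible m p Qs d a b P ∧ X = P * Pᵀ) ∧
    ({v : ℝ | ∃ P : Matrix (Fin n) (Fin k) ℝ, QMP1feasible m p Qs d a b P ∧
        v = (Pᵀ * Q0 * P).trace} =
      {v : ℝ | ∃ X : Matrix (Fin n) (Fin n) ℝ, BSDP1feasible k m p Qs d a b X ∧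
        v = (Q0ᵀ * X).trace}) ∧
    sInf {v : ℝ | ∃ P : Matrix (Fin n) (Fin k) ℝ, QMP1feasible m p Qs d a b P ∧
        v = (Pᵀ * Q0 * P).trace} =
      sInf {v : ℝ | ∃ X : Matrix (Fin n) (Fin n) ℝ, BSDP1feasible k m p Qs d a b X ∧
        v = (Q0ᵀ * X).trace} := by
  have hseteq : {v : ℝ | ∃ P : Matrix (Fin n) (Fin k) ℝ, QMP1feasible m p Qs d a b P ∧
        v = (Pᵀ * Q0 * P).trace} =
      {v : ℝ | ∃ X : Matrix (Fin n) (Fin n) ℝ, BSDP1feasible k m p Qs d a b X ∧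
        v = (Q0ᵀ * X).trace} := by
    ext v
    constructor
    · rintro ⟨P, hP, rfl⟩
      exact ⟨P * Pᵀ, parta Qs hQs d a b P hP, traceHelper Q0 hQ0 P⟩
    · rintro ⟨X, hX, rfl⟩
      obtain ⟨P, hP, rfl⟩ := partb hk Qs hQs d a b hb X hX
      exact ⟨P, hP, (traceHelper Q0 hQ0 P).symm ▸ rfl⟩
  refine ⟨fun P hP => ⟨parta Qs hQs d a b P hP, (traceHelper Q0 hQ0 P).symm⟩,
    fun X hX => partb hk Qs hQs d a b hb X hX, hseteq, by rw [hseteq]⟩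
end

section
/- Let n, k, m be positive integers, Q₀, Q₁,…,Q_m symmetric n×n real matrices, B₀, B₁,…,B_m ∈ ℝ^{n×k} and d₀, d₁,…,d_m ∈ ℝ. Call P ∈ {0,1}^{n×k} QMP₂-feasible if P1_k ≤ 1_n and tr(PᵀQ_iP) + 2 tr(B_iᵀP) + d_i ≤ 0 for all i ∈ {1,…,m}. Call a pair (P, X) with P ∈ {0,1}^{n×k} and X a symmetric matrix in {0,1}^{n×n} BSDP-feasible if diag(X) = P1_k, tr(Q_iX) + 2 tr(B_iᵀP) + d_i ≤ 0 for all i ∈ {1,…,m}, and the (n+k)×(n+k) block matrix with top-left block I_k, top-right block Pᵀ, bottom-left block P and bottom-right block X is PSD. Then: (a) if P is QMP₂-feasible then (P, PPᵀ) is BSDP-feasible with tr(Q₀PPᵀ) + 2tr(B₀ᵀP) + d₀ = tr(PᵀQ₀P) + 2tr(B₀ᵀP) + d₀; (b) if (P, X) is BSDP-feasible then X = PPᵀ and P is QMP₂-feasible. In particular the two programs have the same optimal value. -/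
open Matrix

/-- Feasibility for the binary quadratic matrix program `QMP₂`:
`P ∈ {0,1}^{n×k}`, `P 1_k ≤ 1_n`, and
`tr(Pᵀ Q_i P) + 2 tr(B_iᵀ P) + d_i ≤ 0` for `i ∈ [m]`. -/
def QMP2feasible {n k : ℕ} (m : ℕ) (Qs : Fin m → Matrix (Fin n) (Fin n) ℝ)
    (Bs : Fin m → Matrix (Fin n) (Fin k) ℝ) (d : Fin m → ℝ)
    (P : Matrix (Fin n) (Fin k) ℝ) : Prop :=
  (∀ i j, P i j = 0 ∨ P i j = 1) ∧
  (∀ i, P.mulVec (fun _ => 1) i ≤ 1) ∧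
  (∀ i : Fin m, (Pᵀ * Qs i * P).trace + 2 * ((Bs i)ᵀ * P).trace + d i ≤ 0)

/-- Feasibility for the corresponding binary semidefinite program:
`P ∈ {0,1}^{n×k}`, `X ∈ {0,1}^{n×n}` symmetric, `diag X = P 1_k`,
`tr(Q_i X) + 2 tr(B_iᵀ P) + d_i ≤ 0` for `i ∈ [m]`, and the `(n+k) × (n+k)` block
matrix `[[I_k, Pᵀ], [P, X]]` PSD. -/
def BSDP2feasible {n k : ℕ} (m : ℕ) (Qs : Fin m → Matrix (Fin n) (Fin n) ℝ)
    (Bs : Fin m → Matrix (Fin n) (Fin k) ℝ) (d : Fin m → ℝ)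
    (P : Matrix (Fin n) (Fin k) ℝ) (X : Matrix (Fin n) (Fin n) ℝ) : Prop :=
  (∀ i j, P i j = 0 ∨ P i j = 1) ∧
  (∀ i j, X i j = 0 ∨ X i j = 1) ∧ X.IsSymm ∧
  X.diag = P.mulVec (fun _ => 1) ∧
  (∀ i : Fin m, (Qs i * X).trace + 2 * ((Bs i)ᵀ * P).trace + d i ≤ 0) ∧
  (Matrix.fromBlocks (1 : Matrix (Fin k) (Fin k) ℝ) Pᵀ P X).PosSemidef


private lemma psd_zero_diag {n : ℕ} {Y : Matrix (Fin n) (Fin n) ℝ} (hY : Y.PosSemidef)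
    (hd : ∀ i, Y i i = 0) : Y = 0 := by
  obtain ⟨A, rfl⟩ : ∃ A : Matrix (Fin n) (Fin n) ℝ, Y = Aᴴ * A := by
    open MatrixOrder in
    obtain ⟨B, hB⟩ := CStarAlgebra.nonneg_iff_eq_star_mul_self.mp hY.nonneg
    exact ⟨B, hB⟩
  have hcol : ∀ i l, A l i = 0 := by
    intro i l
    have h0 : ∑ t, A t i * A t i = 0 := by
      simpa [Matrix.mul_apply, Matrix.conjTranspose_apply] using hd i
    exact mul_self_eq_zero.mp ((Finset.sum_eq_zero_iff_of_nonneg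
      (fun t _ => mul_self_nonneg (A t i))).mp h0 l (Finset.mem_univ l))
  ext i j
  simp [Matrix.mul_apply, Matrix.conjTranspose_apply, hcol]

private lemma PPt_entries {n k : ℕ} {P : Matrix (Fin n) (Fin k) ℝ}
    (hb : ∀ i j, P i j = 0 ∨ P i j = 1)
    (hr : ∀ i, P.mulVec (fun _ => 1) i ≤ 1) :
    ∀ i j, (P * Pᵀ) i j = 0 ∨ (P * Pᵀ) i j = 1 := by
  intro i j
  have hsum : (P * Pᵀ) i j
      = ((Finset.univ.filter fun l => P i l = 1 ∧ P j l = 1).card : ℝ) := by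
    rw [Matrix.mul_apply, ← Finset.sum_boole]
    refine Finset.sum_congr rfl fun l _ => ?_
    rcases hb i l with h1 | h1 <;> rcases hb j l with h2 | h2 <;>
      simp [Matrix.transpose_apply, h1, h2]
  have hci : ((Finset.univ.filter fun l => P i l = 1).card : ℝ) ≤ 1 := by
    have : ((Finset.univ.filter fun l => P i l = 1).card : ℝ)
        = ∑ l, P i l := by
      rw [← Finset.sum_boole]
      refine Finset.sum_congr rfl fun l _ => ?_
      rcases hb i l with h1 | h1 <;> simp [h1]
    rw [this]
    simpa [Matrix.mulVec, dotProduct] using hr i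
  have hci' : (Finset.univ.filter fun l => P i l = 1).card ≤ 1 := by
    exact_mod_cast hci
  have hsub : (Finset.univ.filter fun l => P i l = 1 ∧ P j l = 1).card
      ≤ (Finset.univ.filter fun l => P i l = 1).card :=
    Finset.card_le_card (by
      intro x hx
      simp only [Finset.mem_filter, Finset.mem_univ, true_and] at hx ⊢
      exact hx.1)
  have : (Finset.univ.filter fun l => P i l = 1 ∧ P j l = 1).card ≤ 1 := le_trans hsub hci'
  interval_cases h : (Finset.univ.filter fun l => P i l = 1 ∧ P j l = 1).card <;>
    simp [hsum, h]

private lemma PPt_diag {n k : ℕ} {P : Matrix (Fin n) (Fin k) ℝ}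
    (hb : ∀ i j, P i j = 0 ∨ P i j = 1) (i : Fin n) :
    (P * Pᵀ) i i = P.mulVec (fun _ => 1) i := by
  rw [Matrix.mul_apply]
  simp only [Matrix.mulVec, dotProduct, mul_one]
  refine Finset.sum_congr rfl fun l _ => ?_
  rcases hb i l with h | h <;> simp [Matrix.transpose_apply, h]

private lemma block_psd {n k : ℕ} (P : Matrix (Fin n) (Fin k) ℝ) :
    (Matrix.fromBlocks (1 : Matrix (Fin k) (Fin k) ℝ) Pᵀ P (P * Pᵀ)).PosSemidef := by
  have h : Matrix.fromBlocks (1 : Matrix (Fin k) (Fin k) ℝ) Pᵀ P (P * Pᵀ)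
      = Matrix.fromRows (1 : Matrix (Fin k) (Fin k) ℝ) P
        * (Matrix.fromRows (1 : Matrix (Fin k) (Fin k) ℝ) P)ᴴ := by
    rw [Matrix.conjTranspose_eq_transpose_of_trivial, Matrix.transpose_fromRows,
      Matrix.fromRows_mul_fromCols]
    simp
  rw [h]
  exact Matrix.posSemidef_self_mul_conjTranspose _

private lemma schur_X_eq {n k : ℕ} {P : Matrix (Fin n) (Fin k) ℝ}
    {X : Matrix (Fin n) (Fin n) ℝ} (hb : ∀ i j, P i j = 0 ∨ P i j = 1)
    (hdiag : X.diag = P.mulVec (fun _ => 1))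
    (hpsd : (Matrix.fromBlocks (1 : Matrix (Fin k) (Fin k) ℝ) Pᵀ P X).PosSemidef) :
    X = P * Pᵀ := by
  have hP : P = (Pᵀ)ᴴ := by
    rw [Matrix.conjTranspose_eq_transpose_of_trivial, Matrix.transpose_transpose]
  have hpsd' : (Matrix.fromBlocks (1 : Matrix (Fin k) (Fin k) ℝ) Pᵀ ((Pᵀ)ᴴ) X).PosSemidef := by
    rwa [← hP]
  have hone : (1 : Matrix (Fin k) (Fin k) ℝ).PosDef := Matrix.PosDef.one
  haveI : Invertible (1 : Matrix (Fin k) (Fin k) ℝ) := invertibleOne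
  have hschur := (Matrix.PosDef.fromBlocks₁₁ Pᵀ X hone).mp hpsd'
  have hY : (X - P * Pᵀ).PosSemidef := by
    have : (Pᵀ)ᴴ * (1 : Matrix (Fin k) (Fin k) ℝ)⁻¹ * Pᵀ = P * Pᵀ := by
      rw [← hP, inv_one, Matrix.mul_one]
    rwa [this] at hschur
  have hzero : X - P * Pᵀ = 0 := by
    refine psd_zero_diag hY fun i => ?_
    have h1 : X i i = P.mulVec (fun _ => 1) i := congrFun hdiag i
    have h2 := PPt_diag hb i
    simp [Matrix.sub_apply, h1, h2]
  have := sub_eq_zero.mp hzero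
  exact this

/-- Equivalence of the binary quadratic matrix program `QMP₂` and its BSDP reformulation:
(a) a `QMP₂`-feasible `P` yields the BSDP-feasible pair `(P, P Pᵀ)` with the same objective;
(b) a BSDP-feasible pair `(P, X)` satisfies `X = P Pᵀ` and `P` is `QMP₂`-feasible;
consequently the two programs have the same attained objective values and optimal value. -/
theorem stmt14 (n k m : ℕ) (hn : 0 < n) (hk : 0 < k) (hm : 0 < m)
    (Q0 : Matrix (Fin n) (Fin n) ℝ) (hQ0 : Q0.IsSymm)
    (Qs : Fin m → Matrix (Fin n) (Fin n) ℝ) (hQs : ∀ i, (Qs i).IsSymm)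
    (B0 : Matrix (Fin n) (Fin k) ℝ) (Bs : Fin m → Matrix (Fin n) (Fin k) ℝ)
    (d0 : ℝ) (d : Fin m → ℝ) :
    (∀ P : Matrix (Fin n) (Fin k) ℝ, QMP2feasible m Qs Bs d P →
      BSDP2feasible m Qs Bs d P (P * Pᵀ) ∧
      (Q0 * (P * Pᵀ)).trace + 2 * (B0ᵀ * P).trace + d0 =
        (Pᵀ * Q0 * P).trace + 2 * (B0ᵀ * P).trace + d0) ∧
    (∀ (P : Matrix (Fin n) (Fin k) ℝ) (X : Matrix (Fin n) (Fin n) ℝ),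
      BSDP2feasible m Qs Bs d P X → X = P * Pᵀ ∧ QMP2feasible m Qs Bs d P) ∧
    ({v : ℝ | ∃ P : Matrix (Fin n) (Fin k) ℝ, QMP2feasible m Qs Bs d P ∧
        v = (Pᵀ * Q0 * P).trace + 2 * (B0ᵀ * P).trace + d0} =
      {v : ℝ | ∃ (P : Matrix (Fin n) (Fin k) ℝ) (X : Matrix (Fin n) (Fin n) ℝ),
        BSDP2feasible m Qs Bs d P X ∧
        v = (Q0 * X).trace + 2 * (B0ᵀ * P).trace + d0}) ∧
    sInf {v : ℝ | ∃ P : Matrix (Fin n) (Fin k) ℝ, QMP2feasible m Qs Bs d P ∧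
        v = (Pᵀ * Q0 * P).trace + 2 * (B0ᵀ * P).trace + d0} =
      sInf {v : ℝ | ∃ (P : Matrix (Fin n) (Fin k) ℝ) (X : Matrix (Fin n) (Fin n) ℝ),
        BSDP2feasible m Qs Bs d P X ∧
        v = (Q0 * X).trace + 2 * (B0ᵀ * P).trace + d0} := by
  have tr_eq : ∀ (Q : Matrix (Fin n) (Fin n) ℝ) (P : Matrix (Fin n) (Fin k) ℝ),
      (Q * (P * Pᵀ)).trace = (Pᵀ * Q * P).trace := by
    intro Q P
    rw [← Matrix.mul_assoc, Matrix.trace_mul_comm, ← Matrix.mul_assoc]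
  have partA : ∀ P : Matrix (Fin n) (Fin k) ℝ, QMP2feasible m Qs Bs d P →
      BSDP2feasible m Qs Bs d P (P * Pᵀ) ∧
      (Q0 * (P * Pᵀ)).trace + 2 * (B0ᵀ * P).trace + d0 =
        (Pᵀ * Q0 * P).trace + 2 * (B0ᵀ * P).trace + d0 := by
    intro P hP
    obtain ⟨hb, hr, ht⟩ := hP
    refine ⟨⟨hb, PPt_entries hb hr, ?_, ?_, ?_, block_psd P⟩, by rw [tr_eq]⟩
    · unfold Matrix.IsSymm
      rw [Matrix.transpose_mul, Matrix.transpose_transpose]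
    · funext i
      exact PPt_diag hb i
    · intro i
      rw [tr_eq]
      exact ht i
  have partB : ∀ (P : Matrix (Fin n) (Fin k) ℝ) (X : Matrix (Fin n) (Fin n) ℝ),
      BSDP2feasible m Qs Bs d P X → X = P * Pᵀ ∧ QMP2feasible m Qs Bs d P := by
    intro P X hPX
    obtain ⟨hb, hXb, hXs, hdiag, ht, hpsd⟩ := hPX
    have hX : X = P * Pᵀ := schur_X_eq hb hdiag hpsd
    refine ⟨hX, hb, ?_, ?_⟩
    · intro i
      have h1 : X i i = P.mulVec (fun _ => 1) i := congrFun hdiag i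
      rcases hXb i i with h | h <;> rw [← h1, h] <;> norm_num
    · intro i
      have := ht i
      rwa [hX, tr_eq] at this
  have setEq : ({v : ℝ | ∃ P : Matrix (Fin n) (Fin k) ℝ, QMP2feasible m Qs Bs d P ∧
        v = (Pᵀ * Q0 * P).trace + 2 * (B0ᵀ * P).trace + d0} =
      {v : ℝ | ∃ (P : Matrix (Fin n) (Fin k) ℝ) (X : Matrix (Fin n) (Fin n) ℝ),
        BSDP2feasible m Qs Bs d P X ∧
        v = (Q0 * X).trace + 2 * (B0ᵀ * P).trace + d0}) := by
    ext v
    constructor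
    · rintro ⟨P, hP, rfl⟩
      exact ⟨P, P * Pᵀ, (partA P hP).1, ((partA P hP).2).symm⟩
    · rintro ⟨P, X, hPX, rfl⟩
      obtain ⟨hX, hQ⟩ := partB P X hPX
      exact ⟨P, hQ, by rw [hX, tr_eq]⟩
  exact ⟨partA, partB, setEq, by rw [setEq]⟩
end

section
/- Let A, B be symmetric n×n real matrices and C an n×n real matrix. Call a tuple (X, Y, Z, R) with X an n×n permutation matrix, R ∈ ℝ^{n×n} and Y, Z symmetric n×n real matrices MISDP-feasible if R = XB and the 3n×3n block matrix with block rows (I_n, Xᵀ, Rᵀ), (X, I_n, Y), (R, Y, Z) is PSD. Then: (a) every MISDP-feasible tuple (X, Y, Z, R) satisfies Y = XBXᵀ, so ⟨A, Y⟩ + ⟨C, X⟩ = tr(AXBXᵀ) + tr(CXᵀ); (b) for every n×n permutation matrix X, setting R := XB, Y := XBXᵀ and Z := RRᵀ yields an MISDP-feasible tuple. Consequently, the minimum of ⟨A, Y⟩ + ⟨C, X⟩ over MISDP-feasible tuples equals the minimum of tr(AXBXᵀ) + tr(CXᵀ) over all n×n permutation matrices X (the quadratic assignment problem). -/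
open Matrix

/-- A real matrix is a permutation matrix if its entries are in `{0,1}` and
every row and every column sums to `1`. -/
def IsPermMatrix {n : ℕ} (Q : Matrix (Fin n) (Fin n) ℝ) : Prop :=
  (∀ i j, Q i j = 0 ∨ Q i j = 1) ∧ (∀ i, ∑ j, Q i j = 1) ∧ (∀ j, ∑ i, Q i j = 1)

/-- The `3n × 3n` block matrix with block rows `(I_n, Xᵀ, Rᵀ)`, `(X, I_n, Y)`, `(R, Y, Z)`. -/
def qapBlock {n : ℕ} (X Y Z R : Matrix (Fin n) (Fin n) ℝ) :
    Matrix ((Fin n ⊕ Fin n) ⊕ Fin n) ((Fin n ⊕ Fin n) ⊕ Fin n) ℝ :=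
  Matrix.fromBlocks
    (Matrix.fromBlocks 1 Xᵀ X 1)
    (Matrix.fromRows Rᵀ Y)
    (Matrix.fromCols R Y) Z

/-- Feasibility for the MISDP formulation of the quadratic assignment problem:
`X` a permutation matrix, `Y, Z` symmetric, `R = X B` and the `3n × 3n` block matrix PSD. -/
def QAPmisdpFeasible {n : ℕ} (B : Matrix (Fin n) (Fin n) ℝ)
    (X Y Z R : Matrix (Fin n) (Fin n) ℝ) : Prop :=
  IsPermMatrix X ∧ Y.IsSymm ∧ Z.IsSymm ∧ R = X * B ∧ (qapBlock X Y Z R).PosSemidef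

lemma IsPermMatrix.transpose {n : ℕ} {X : Matrix (Fin n) (Fin n) ℝ}
    (h : IsPermMatrix X) : IsPermMatrix Xᵀ :=
  ⟨fun i j => h.1 j i, h.2.2, h.2.1⟩

lemma IsPermMatrix.mul_transpose_self {n : ℕ} {X : Matrix (Fin n) (Fin n) ℝ}
    (h : IsPermMatrix X) : X * Xᵀ = 1 := by
  obtain ⟨h0, h1, h2⟩ := h
  ext i j
  rw [mul_apply, one_apply]
  by_cases hij : i = j
  · subst hij
    simp only [transpose_apply, if_pos rfl]
    calc ∑ k, X i k * X i k = ∑ k, X i k := by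
          refine Finset.sum_congr rfl fun k _ => ?_
          rcases h0 i k with h | h <;> simp [h]
      _ = 1 := h1 i
  · rw [if_neg hij]
    refine Finset.sum_eq_zero fun k _ => ?_
    simp only [transpose_apply]
    rcases h0 i k with hi | hi
    · simp [hi]
    rcases h0 j k with hj | hj
    · simp [hj]
    exfalso
    have hle : ∑ m ∈ ({i, j} : Finset (Fin n)), X m k ≤ ∑ m, X m k := by
      refine Finset.sum_le_sum_of_subset_of_nonneg (Finset.subset_univ _) fun m _ _ => ?_
      rcases h0 m k with h | h <;> simp [h]
    rw [Finset.sum_pair hij, hi, hj, h2 k] at hle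
    linarith

/-- From PSD of the block matrix and orthogonality of `X`, we get `Y = R Xᵀ`. -/
lemma qapBlock_psd_Y_eq {n : ℕ} {X Y Z R : Matrix (Fin n) (Fin n) ℝ} (hXXt : X * Xᵀ = 1)
    (hPSD : (qapBlock X Y Z R).PosSemidef) : Y = R * Xᵀ := by
  have hmv : ∀ u : Fin n → ℝ, Y *ᵥ u = (R * Xᵀ) *ᵥ u := by
    intro u
    set v : ((Fin n ⊕ Fin n) ⊕ Fin n) → ℝ :=
      Sum.elim (Sum.elim (Xᵀ *ᵥ u) (-u)) (0 : Fin n → ℝ) with hv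
    have hcomp : qapBlock X Y Z R *ᵥ v =
        Sum.elim (Sum.elim (0 : Fin n → ℝ) (0 : Fin n → ℝ)) ((R * Xᵀ) *ᵥ u - Y *ᵥ u) := by
      unfold qapBlock
      rw [hv]
      simp [fromBlocks_mulVec, fromRows_mulVec, fromCols_mulVec_sumElim,
        mulVec_mulVec, hXXt, one_mulVec, mulVec_neg, sub_eq_add_neg]
    have h0 : qapBlock X Y Z R *ᵥ v = 0 := by
      rw [← hPSD.dotProduct_mulVec_zero_iff, hcomp, hv]
      simp [dotProduct, Fintype.sum_sum_type]
    rw [hcomp] at h0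
    funext i
    have := congrFun h0 (Sum.inr i)
    simp only [Sum.elim_inr, Pi.zero_apply, Pi.sub_apply, sub_eq_zero] at this
    exact this.symm
  ext i j
  have := congrFun (hmv (Pi.single j 1)) i
  simpa [mulVec_single] using this

/-- Construction of a feasible PSD block for a permutation matrix. -/
lemma qapBlock_psd_of_perm {n : ℕ} {X B : Matrix (Fin n) (Fin n) ℝ} (hB : B.IsSymm)
    (hXXt : X * Xᵀ = 1) :
    (qapBlock X (X * B * Xᵀ) ((X * B) * (X * B)ᵀ) (X * B)).PosSemidef := by
  set N : Matrix (Fin n) ((Fin n ⊕ Fin n) ⊕ Fin n) ℝ :=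
    fromCols (fromCols (1 : Matrix (Fin n) (Fin n) ℝ) Xᵀ) (B * Xᵀ) with hN
  have key : qapBlock X (X * B * Xᵀ) ((X * B) * (X * B)ᵀ) (X * B) = Nᴴ * N := by
    have hct : Nᴴ = fromRows (fromRows (1 : Matrix (Fin n) (Fin n) ℝ) X) (X * B) := by
      ext (i | i) j
      · cases i <;>
          simp [hN, conjTranspose_apply, fromCols, fromRows_apply_inl, fromRows_apply_inr, mul_apply, one_apply, eq_comm]
      · simp [hN, conjTranspose_apply, fromCols, fromRows_apply_inl, fromRows_apply_inr, mul_apply, hB.apply, mul_comm]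
    rw [hct, hN, fromRows_mul, mul_fromCols, mul_fromCols, mul_fromCols,
      mul_fromCols]
    unfold qapBlock
    rw [← fromRows_fromCols_eq_fromBlocks, ← fromCols_fromRows_eq_fromBlocks]
    simp only [fromRows_mul, Matrix.one_mul, Matrix.mul_one, transpose_mul, hB.eq, hXXt,
      Matrix.mul_assoc]
  rw [key]
  exact posSemidef_conjTranspose_mul_self _

/-- (a) Every MISDP-feasible tuple `(X, Y, Z, R)` satisfies `Y = X B Xᵀ`, so the MISDP
objective equals the QAP objective; (b) every permutation matrix `X` extends to an
MISDP-feasible tuple via `R := X B`, `Y := X B Xᵀ`, `Z := R Rᵀ`; consequently the two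
programs have the same optimal value. -/
theorem stmt15 (n : ℕ) (A B C : Matrix (Fin n) (Fin n) ℝ)
    (hA : A.IsSymm) (hB : B.IsSymm) :
    (∀ X Y Z R : Matrix (Fin n) (Fin n) ℝ, QAPmisdpFeasible B X Y Z R →
      Y = X * B * Xᵀ ∧
      (Aᵀ * Y).trace + (Cᵀ * X).trace = (A * X * B * Xᵀ).trace + (C * Xᵀ).trace) ∧
    (∀ X : Matrix (Fin n) (Fin n) ℝ, IsPermMatrix X →
      QAPmisdpFeasible B X (X * B * Xᵀ) ((X * B) * (X * B)ᵀ) (X * B)) ∧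
    ({v : ℝ | ∃ X Y Z R : Matrix (Fin n) (Fin n) ℝ, QAPmisdpFeasible B X Y Z R ∧
        v = (Aᵀ * Y).trace + (Cᵀ * X).trace} =
      {v : ℝ | ∃ X : Matrix (Fin n) (Fin n) ℝ, IsPermMatrix X ∧
        v = (A * X * B * Xᵀ).trace + (C * Xᵀ).trace}) ∧
    sInf {v : ℝ | ∃ X Y Z R : Matrix (Fin n) (Fin n) ℝ, QAPmisdpFeasible B X Y Z R ∧
        v = (Aᵀ * Y).trace + (Cᵀ * X).trace} =
      sInf {v : ℝ | ∃ X : Matrix (Fin n) (Fin n) ℝ, IsPermMatrix X ∧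
        v = (A * X * B * Xᵀ).trace + (C * Xᵀ).trace} := by
  have partA : ∀ X Y Z R : Matrix (Fin n) (Fin n) ℝ, QAPmisdpFeasible B X Y Z R →
      Y = X * B * Xᵀ ∧
      (Aᵀ * Y).trace + (Cᵀ * X).trace = (A * X * B * Xᵀ).trace + (C * Xᵀ).trace := by
    rintro X Y Z R ⟨hX, hYs, hZs, hR, hPSD⟩
    have hYeq : Y = X * B * Xᵀ := by
      rw [qapBlock_psd_Y_eq hX.mul_transpose_self hPSD, hR]
    refine ⟨hYeq, ?_⟩
    have h1 : (Aᵀ * Y).trace = (A * X * B * Xᵀ).trace := by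
      rw [hA.eq, hYeq, ← Matrix.mul_assoc, ← Matrix.mul_assoc]
    have h2 : (Cᵀ * X).trace = (C * Xᵀ).trace := by
      rw [← trace_transpose (C * Xᵀ), transpose_mul, transpose_transpose, trace_mul_comm]
    rw [h1, h2]
  have partB : ∀ X : Matrix (Fin n) (Fin n) ℝ, IsPermMatrix X →
      QAPmisdpFeasible B X (X * B * Xᵀ) ((X * B) * (X * B)ᵀ) (X * B) := by
    intro X hX
    refine ⟨hX, ?_, ?_, rfl, qapBlock_psd_of_perm hB hX.mul_transpose_self⟩
    · rw [Matrix.IsSymm, transpose_mul, transpose_mul, transpose_transpose, hB.eq,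
        Matrix.mul_assoc]
    · rw [Matrix.IsSymm, transpose_mul, transpose_transpose]
  have setEq : ({v : ℝ | ∃ X Y Z R : Matrix (Fin n) (Fin n) ℝ, QAPmisdpFeasible B X Y Z R ∧
        v = (Aᵀ * Y).trace + (Cᵀ * X).trace} =
      {v : ℝ | ∃ X : Matrix (Fin n) (Fin n) ℝ, IsPermMatrix X ∧
        v = (A * X * B * Xᵀ).trace + (C * Xᵀ).trace}) := by
    ext v
    simp only [Set.mem_setOf_eq]
    constructor
    · rintro ⟨X, Y, Z, R, hfeas, rfl⟩
      exact ⟨X, hfeas.1, (partA X Y Z R hfeas).2⟩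
    · rintro ⟨X, hX, rfl⟩
      exact ⟨X, X * B * Xᵀ, (X * B) * (X * B)ᵀ, X * B, partB X hX,
        ((partA _ _ _ _ (partB X hX)).2).symm⟩
  exact ⟨partA, partB, setEq, by rw [setEq]⟩
end

section
/- Let n and k be positive integers with k dividing n. A symmetric matrix X ∈ {0,1}^{n×n} satisfies diag(X) = 1_n, X 1_n = (n/k) 1_n, and kX − J_n PSD if and only if there exists a matrix P ∈ {0,1}^{n×k} with P 1_k = 1_n and Pᵀ 1_n = (n/k) 1_k such that X = PPᵀ. Consequently, for any symmetric weight matrix L, the minimum of (1/2)⟨L, X⟩ over the former set equals the minimum of (1/2)⟨L, PPᵀ⟩ over the latter (the k-equipartition problem). -/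
open Matrix

/-- The `n × n` all-ones matrix `J_n`. -/
def allOnesM (n : ℕ) : Matrix (Fin n) (Fin n) ℝ := Matrix.of fun _ _ => 1

/-- Feasibility for the BSDP formulation of the `k`-equipartition problem:
`X ∈ {0,1}^{n×n}` symmetric, `diag X = 1_n`, `X 1_n = (n/k) 1_n` and `k X − J_n` PSD. -/
def kEPbsdpFeasible (n k : ℕ) (X : Matrix (Fin n) (Fin n) ℝ) : Prop :=
  X.IsSymm ∧ (∀ i j, X i j = 0 ∨ X i j = 1) ∧
  (X.diag = fun _ => 1) ∧
  (X.mulVec (fun _ => 1) = fun _ => ((n / k : ℕ) : ℝ)) ∧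
  ((k : ℝ) • X - allOnesM n).PosSemidef

/-- Feasibility for the partition-matrix formulation of the `k`-equipartition problem:
`P ∈ {0,1}^{n×k}`, `P 1_k = 1_n` and `Pᵀ 1_n = (n/k) 1_k`. -/
def kEPpartitionFeasible (n k : ℕ) (P : Matrix (Fin n) (Fin k) ℝ) : Prop :=
  (∀ i j, P i j = 0 ∨ P i j = 1) ∧
  (P.mulVec (fun _ => 1) = fun _ => 1) ∧
  (Pᵀ.mulVec (fun _ => 1) = fun _ => ((n / k : ℕ) : ℝ))

-- PSD of k•I - J_k
lemma psd_kI_sub_J (k : ℕ) : ((k:ℝ) • (1 : Matrix (Fin k) (Fin k) ℝ) - allOnesM k).PosSemidef := by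
  refine PosSemidef.of_dotProduct_mulVec_nonneg ?_ ?_
  · ext i j
    simp [allOnesM, conjTranspose_apply, one_apply, eq_comm]
  · intro x
    have hx : star x = x := by simp
    rw [hx]
    have hmv : ∀ i, (((k:ℝ) • (1 : Matrix (Fin k) (Fin k) ℝ) - allOnesM k) *ᵥ x) i
        = (k:ℝ) * x i - ∑ j, x j := by
      intro i
      simp only [mulVec, dotProduct, Matrix.sub_apply, Matrix.smul_apply, allOnesM, of_apply, one_apply,
        smul_eq_mul, mul_ite, mul_one, mul_zero]
      rw [Finset.sum_congr rfl (fun j _ => sub_mul _ 1 (x j)), Finset.sum_sub_distrib]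
      simp [ite_mul, Finset.sum_ite_eq, mul_comm]
    have hdp : x ⬝ᵥ (((k:ℝ) • (1 : Matrix (Fin k) (Fin k) ℝ) - allOnesM k) *ᵥ x)
        = (k:ℝ) * ∑ i, x i ^ 2 - (∑ i, x i) ^ 2 := by
      simp only [dotProduct, hmv]
      rw [Finset.sum_congr rfl (fun i _ => mul_sub (x i) ((k:ℝ) * x i) (∑ j, x j)),
        Finset.sum_sub_distrib, ← Finset.sum_mul]
      ring_nf
      congr 1
      · rw [Finset.mul_sum]
        exact Finset.sum_congr rfl fun i _ => by ring
    rw [hdp]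
    have := sq_sum_le_card_mul_sum_sq (s := (Finset.univ : Finset (Fin k))) (f := x)
    simp only [Finset.card_univ, Fintype.card_fin] at this
    linarith


lemma back (n k : ℕ) (P : Matrix (Fin n) (Fin k) ℝ)
    (hP : kEPpartitionFeasible n k P) : kEPbsdpFeasible n k (P * Pᵀ) := by
  obtain ⟨h01, hrow, hcol⟩ := hP
  -- row sums of P are 1
  have hrow1 : ∀ i, ∑ l, P i l = 1 := by
    intro i
    have := congrFun hrow i
    simpa [mulVec, dotProduct] using this
  -- each row has a unique 1
  have hc : ∀ i, ∃ c, ∀ l, P i l = if l = c then 1 else 0 := by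
    intro i
    have hcard : (Finset.univ.filter (fun l => P i l = 1)).card = 1 := by
      have : ∑ l, P i l = ∑ l, (if P i l = 1 then (1:ℝ) else 0) :=
        Finset.sum_congr rfl fun l _ => by rcases h01 i l with h | h <;> simp [h]
      rw [hrow1 i] at this
      rw [Finset.sum_boole] at this
      exact_mod_cast this.symm
    obtain ⟨c, hc⟩ := Finset.card_eq_one.mp hcard
    refine ⟨c, fun l => ?_⟩
    by_cases hl : l = c
    · subst hl
      have : l ∈ Finset.univ.filter (fun l => P i l = 1) := by
        rw [hc]; exact Finset.mem_singleton_self l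
      simpa using this
    · simp only [hl, if_false]
      rcases h01 i l with h | h
      · exact h
      · exfalso
        have : l ∈ Finset.univ.filter (fun l => P i l = 1) := by simp [h]
        rw [hc, Finset.mem_singleton] at this
        exact hl this
  choose c hcspec using hc
  have hentry : ∀ i j, (P * Pᵀ) i j = if c i = c j then 1 else 0 := by
    intro i j
    rw [mul_apply]
    simp only [transpose_apply, hcspec]
    simp [ite_mul, mul_ite, Finset.sum_ite_eq', eq_comm]
  refine ⟨?_, ?_, ?_, ?_, ?_⟩
  · rw [Matrix.IsSymm, transpose_mul, transpose_transpose]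
  · intro i j
    rw [hentry]
    split <;> simp
  · funext i
    simp [Matrix.diag, hentry]
  · rw [← mulVec_mulVec, hcol]
    funext i
    simp only [mulVec, dotProduct]
    rw [← Finset.sum_mul, hrow1 i, one_mul]
  · have hJ : P * allOnesM k * Pᵀ = allOnesM n := by
      ext i j
      simp only [mul_apply, allOnesM, of_apply, transpose_apply]
      calc ∑ l, (∑ a, P i a * 1) * P j l = ∑ l, P j l := by
            simp [hrow1 i]
        _ = 1 := hrow1 j
    have hsm : P * ((k:ℝ) • (1 : Matrix (Fin k) (Fin k) ℝ)) * Pᵀ = (k:ℝ) • (P * Pᵀ) := by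
      rw [Matrix.mul_smul, Matrix.mul_one, Matrix.smul_mul]
    have key : (k : ℝ) • (P * Pᵀ) - allOnesM n
        = P * ((k:ℝ) • (1 : Matrix (Fin k) (Fin k) ℝ) - allOnesM k) * Pᵀ := by
      rw [Matrix.mul_sub, Matrix.sub_mul, hJ, hsm]
    rw [key]
    exact (psd_kI_sub_J k).mul_mul_conjTranspose_same P

lemma trans_of_psd (n k : ℕ) (X : Matrix (Fin n) (Fin n) ℝ) (hsym : X.IsSymm)
    (hdiag : X.diag = fun _ => 1)
    (h01 : ∀ i j, X i j = 0 ∨ X i j = 1)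
    (hpsd : ((k : ℝ) • X - allOnesM n).PosSemidef) :
    ∀ i j l, X i j = 1 → X j l = 1 → X i l = 1 := by
  intro i j l hij hjl
  have hsy : ∀ a b, X b a = X a b := fun a b => hsym.apply a b
  have hdg : ∀ a, X a a = 1 := fun a => congrFun hdiag a
  by_cases hij' : i = j
  · subst hij'; exact hjl
  by_cases hjl' : j = l
  · subst hjl'; exact hij
  by_cases hil : i = l
  · subst hil; exact hdg i
  by_contra hX
  have hXil : X i l = 0 := (h01 i l).resolve_right hX
  set M := (k : ℝ) • X - allOnesM n with hM
  have hMab : ∀ a b, M a b = (k : ℝ) * X a b - 1 := by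
    intro a b; simp [hM, allOnesM]
  set x : Fin n → ℝ := Pi.single i 1 + Pi.single l 1 - Pi.single j 1 with hx
  have h0 := hpsd.dotProduct_mulVec_nonneg x
  have hstar : star x = x := by simp [hx]
  rw [hstar] at h0
  have hexp : x ⬝ᵥ (M *ᵥ x) =
      M i i + M i l - M i j + (M l i + M l l - M l j) - (M j i + M j l - M j j) := by
    rw [hx]
    rw [mulVec_sub, mulVec_add, mulVec_single, mulVec_single, mulVec_single]
    rw [sub_dotProduct, add_dotProduct, single_dotProduct, single_dotProduct, single_dotProduct]
    simp [mul_one]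
  rw [hexp] at h0
  rw [hMab, hMab, hMab, hMab, hMab, hMab, hMab, hMab, hMab] at h0
  rw [hdg, hdg, hdg, hij, hjl, hXil, hsy i j, hsy j l, hsy i l, hij, hjl, hXil] at h0
  have : (0:ℝ) ≤ -(k:ℝ) - 1 := by linarith
  have hk0 : (0:ℝ) ≤ (k:ℝ) := Nat.cast_nonneg k
  linarith

lemma fwd (n k : ℕ) (hn : 0 < n) (hk : 0 < k) (hdvd : k ∣ n) (X : Matrix (Fin n) (Fin n) ℝ)
    (hX : kEPbsdpFeasible n k X) :
    ∃ P : Matrix (Fin n) (Fin k) ℝ, kEPpartitionFeasible n k P ∧ X = P * Pᵀ := by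
  classical
  obtain ⟨hsym, h01, hdiag, hrow, hpsd⟩ := hX
  have htrans := trans_of_psd n k X hsym hdiag h01 hpsd
  have hsy : ∀ a b, X b a = X a b := fun a b => hsym.apply a b
  have hdg : ∀ a, X a a = 1 := fun a => congrFun hdiag a
  let S : Setoid (Fin n) := ⟨fun i j => X i j = 1,
    ⟨hdg, fun {a b} h => (hsy a b).trans h, fun {a b c} h1 h2 => htrans a b c h1 h2⟩⟩
  have hmk : ∀ i j : Fin n, Quotient.mk S i = Quotient.mk S j ↔ X i j = 1 := by
    intro i j
    exact ⟨fun h => Quotient.exact h, fun h => Quotient.sound h⟩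
  have class_card : ∀ i, (Finset.univ.filter (fun j => X i j = 1)).card = n / k := by
    intro i
    have h1 : ∑ j, X i j = ((n / k : ℕ) : ℝ) := by
      have := congrFun hrow i; simpa [mulVec, dotProduct] using this
    have h2 : ∑ j, X i j = ((Finset.univ.filter (fun j => X i j = 1)).card : ℝ) := by
      rw [← Finset.sum_boole]
      exact Finset.sum_congr rfl fun j _ => by rcases h01 i j with h | h <;> simp [h]
    exact_mod_cast h2.symm.trans h1
  have fiber_card : ∀ q : Quotient S,
      (Finset.univ.filter (fun i => Quotient.mk S i = q)).card = n / k := by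
    intro q
    induction q using Quotient.inductionOn with
    | h i0 =>
      rw [← class_card i0]
      congr 1
      ext i
      simp only [Finset.mem_filter, Finset.mem_univ, true_and]
      rw [hmk, hsy]
  have hnk_pos : 0 < n / k := Nat.div_pos (Nat.le_of_dvd hn hdvd) hk
  have hcardQ : Fintype.card (Quotient S) = k := by
    have hsum : (Finset.univ : Finset (Fin n)).card =
        ∑ q : Quotient S, (Finset.univ.filter (fun i => Quotient.mk S i = q)).card :=
      Finset.card_eq_sum_card_fiberwise (fun x _ => Finset.mem_univ _)
    rw [Finset.card_univ, Fintype.card_fin,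
      Finset.sum_congr rfl (fun q _ => fiber_card q), Finset.sum_const, Finset.card_univ,
      smul_eq_mul] at hsum
    have hnn : n = k * (n / k) := (Nat.mul_div_cancel' hdvd).symm
    have : Fintype.card (Quotient S) * (n / k) = k * (n / k) := by omega
    exact Nat.eq_of_mul_eq_mul_right hnk_pos this
  let e : Quotient S ≃ Fin k := Fintype.equivFinOfCardEq hcardQ
  refine ⟨Matrix.of fun i j => if e (Quotient.mk S i) = j then (1:ℝ) else 0, ⟨?_, ?_, ?_⟩, ?_⟩
  · intro i j
    dsimp only [of_apply]
    split <;> simp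
  · funext i
    simp only [mulVec, dotProduct, of_apply, ite_mul, one_mul, zero_mul]
    simp [Finset.sum_ite_eq]
  · funext j
    simp only [mulVec, dotProduct, transpose_apply, of_apply, ite_mul, one_mul, zero_mul]
    have : ∀ i : Fin n, (e (Quotient.mk S i) = j) ↔ (Quotient.mk S i = e.symm j) := by
      intro i; exact e.apply_eq_iff_eq_symm_apply
    rw [Finset.sum_congr rfl (fun i _ => by rw [if_congr (this i) rfl rfl])]
    rw [Finset.sum_boole, fiber_card (e.symm j)]
  · ext i j
    rw [mul_apply]
    simp only [transpose_apply, of_apply, ite_mul, mul_ite, mul_one, mul_zero, one_mul,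
      zero_mul, if_false]
    rw [Finset.sum_ite_eq Finset.univ (e (Quotient.mk S j)) (fun l => if e (Quotient.mk S i) = l then (1:ℝ) else 0)]
    simp only [Finset.mem_univ, if_true, e.injective.eq_iff]
    rw [if_congr (hmk i j) rfl rfl]
    rcases h01 i j with h | h <;> simp [h]

/-- A symmetric `{0,1}` matrix `X` satisfies `diag X = 1_n`, `X 1_n = (n/k) 1_n` and
`k X − J_n ⪰ 0` iff `X = P Pᵀ` for some equipartition matrix `P`; consequently, for every
symmetric weight matrix `L`, the two associated minimization problems for the
`k`-equipartition problem have the same optimal value. -/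
theorem stmt16 (n k : ℕ) (hn : 0 < n) (hk : 0 < k) (hdvd : k ∣ n) :
    (∀ X : Matrix (Fin n) (Fin n) ℝ,
      kEPbsdpFeasible n k X ↔
        ∃ P : Matrix (Fin n) (Fin k) ℝ, kEPpartitionFeasible n k P ∧ X = P * Pᵀ) ∧
    (∀ L : Matrix (Fin n) (Fin n) ℝ, L.IsSymm →
      sInf {v : ℝ | ∃ X : Matrix (Fin n) (Fin n) ℝ, kEPbsdpFeasible n k X ∧
          v = (1 / 2 : ℝ) * (Lᵀ * X).trace} =
        sInf {v : ℝ | ∃ P : Matrix (Fin n) (Fin k) ℝ, kEPpartitionFeasible n k P ∧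
          v = (1 / 2 : ℝ) * (Lᵀ * (P * Pᵀ)).trace}) := by
  have h1 : ∀ X : Matrix (Fin n) (Fin n) ℝ,
      kEPbsdpFeasible n k X ↔
        ∃ P : Matrix (Fin n) (Fin k) ℝ, kEPpartitionFeasible n k P ∧ X = P * Pᵀ := by
    intro X
    refine ⟨fwd n k hn hk hdvd X, ?_⟩
    rintro ⟨P, hP, rfl⟩
    exact back n k P hP
  refine ⟨h1, fun L _ => ?_⟩
  congr 1
  ext v
  simp only [Set.mem_setOf_eq]
  constructor
  · rintro ⟨X, hX, rfl⟩
    obtain ⟨P, hP, rfl⟩ := (h1 X).1 hX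
    exact ⟨P, hP, rfl⟩
  · rintro ⟨P, hP, rfl⟩
    exact ⟨P * Pᵀ, (h1 _).2 ⟨P, hP, rfl⟩, rfl⟩
end

section
/- Let n, k be positive integers and m ∈ ℝ^k a vector of positive integers with Σ_{j=1}^{k} m_j = n. Then: (a) every matrix P ∈ ℝ^{n×k} with P ≥ 0, Pᵀ1_n = m, PᵀP = Diag(m) and diag(PPᵀ) = 1_n has all entries in {0,1} and satisfies P1_k = 1_n, and the triple (P, X₁, X₂) := (P, PPᵀ, PᵀP) satisfies P1_k = 1_n, diag(X₁) = 1_n, X₂ = Diag(m), and both block matrices [[I_k, Pᵀ],[P, X₁]] and [[I_n, P],[Pᵀ, X₂]] are PSD; (b) conversely, if P ∈ {0,1}^{n×k}, X₁ is a symmetric n×n matrix and X₂ a symmetric k×k matrix satisfying P1_k = 1_n, diag(X₁) = 1_n, X₂ = Diag(m), and both block matrices [[I_k, Pᵀ],[P, X₁]] and [[I_n, P],[Pᵀ, X₂]] are PSD, then X₁ = PPᵀ, X₂ = PᵀP, and P satisfies P ≥ 0, Pᵀ1_n = m, PᵀP = Diag(m) and diag(PPᵀ) = 1_n. -/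
open Matrix


lemma gramBlock {I J : Type*} [Fintype I] [Fintype J] [DecidableEq J]
    (B : Matrix I J ℝ) :
    (Matrix.fromBlocks (1 : Matrix J J ℝ) Bᵀ B (B * Bᵀ)).PosSemidef := by
  have h := Matrix.posSemidef_conjTranspose_mul_self (Matrix.fromCols (1 : Matrix J J ℝ) Bᵀ)
  rw [Matrix.conjTranspose_fromCols_eq_fromRows_conjTranspose,
    Matrix.fromRows_mul_fromCols] at h
  have hB : Bᵀᴴ = B := by ext i j; simp [Matrix.conjTranspose_apply]
  simp only [Matrix.conjTranspose_one, Matrix.one_mul, Matrix.mul_one] at h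
  rwa [hB] at h

lemma schurQuad {I J : Type*} [Fintype I] [Fintype J] [DecidableEq I]
    (B : Matrix I J ℝ) (D : Matrix J J ℝ)
    (h : (Matrix.fromBlocks (1 : Matrix I I ℝ) B Bᵀ D).PosSemidef) :
    ∀ v : J → ℝ, 0 ≤ v ⬝ᵥ (D - Bᵀ * B).mulVec v := by
  intro v
  have h2 := h.dotProduct_mulVec_nonneg (Sum.elim (-(B.mulVec v)) v)
  rw [Matrix.fromBlocks_mulVec] at h2
  simp only [Matrix.one_mulVec, Sum.elim_comp_inl, Sum.elim_comp_inr, neg_add_cancel,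
    star_trivial, sumElim_dotProduct_sumElim, dotProduct_zero, zero_add,
    Matrix.mulVec_neg, dotProduct_add, dotProduct_neg, Matrix.mulVec_mulVec,
    Matrix.one_mul, neg_dotProduct, RCLike.re_to_real] at h2
  rw [Matrix.sub_mulVec, dotProduct_sub]
  linarith

lemma quadSingle {N : Type*} [Fintype N] [DecidableEq N] (M : Matrix N N ℝ) (a b : N) :
    (Pi.single a (1:ℝ)) ⬝ᵥ M.mulVec (Pi.single b 1) = M a b := by
  simp [Matrix.mulVec_single, single_dotProduct, dotProduct_single]

lemma psdZeroDiag {N : Type*} [Fintype N] [DecidableEq N] (Y : Matrix N N ℝ)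
    (hsym : Yᵀ = Y) (hq : ∀ v, 0 ≤ v ⬝ᵥ Y.mulVec v) (hd : ∀ i, Y i i = 0) : Y = 0 := by
  ext i j
  have h1 := hq (Pi.single i 1 + Pi.single j 1)
  have h2 := hq (Pi.single i 1 - Pi.single j 1)
  rw [Matrix.mulVec_add, add_dotProduct, dotProduct_add, dotProduct_add,
    quadSingle, quadSingle, quadSingle, quadSingle, hd, hd] at h1
  rw [Matrix.mulVec_sub, sub_dotProduct, dotProduct_sub, dotProduct_sub,
    quadSingle, quadSingle, quadSingle, quadSingle, hd, hd] at h2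
  have hji : Y j i = Y i j := by
    have := congrFun (congrFun hsym j) i
    rw [Matrix.transpose_apply] at this
    exact this.symm
  simp only [Matrix.zero_apply]
  rw [hji] at h1 h2
  linarith

/-- Equivalence between the quadratic-matrix-program constraints of the graph partition
problem and their MISDP reformulation.
(a) Every entrywise-nonnegative `P` with `Pᵀ 1_n = m`, `Pᵀ P = Diag(m)` and
`diag(P Pᵀ) = 1_n` is a `{0,1}` partition matrix with `P 1_k = 1_n`, and the triple
`(P, P Pᵀ, Pᵀ P)` satisfies the MISDP constraints.
(b) Conversely, any `{0,1}` matrix `P` with symmetric `X₁, X₂` satisfying the MISDP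
constraints has `X₁ = P Pᵀ`, `X₂ = Pᵀ P`, and `P` satisfies the original constraints. -/
theorem stmt18 (n k : ℕ) (hn : 0 < n) (hk : 0 < k) (m : Fin k → ℕ)
    (hmpos : ∀ j, 0 < m j) (hmsum : ∑ j, m j = n) :
    (∀ P : Matrix (Fin n) (Fin k) ℝ,
      (∀ i j, 0 ≤ P i j) →
      (Pᵀ.mulVec (fun _ => 1) = fun j => (m j : ℝ)) →
      (Pᵀ * P = Matrix.diagonal fun j => (m j : ℝ)) →
      ((P * Pᵀ).diag = fun _ => 1) →
      (∀ i j, P i j = 0 ∨ P i j = 1) ∧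
      (P.mulVec (fun _ => 1) = fun _ => 1) ∧
      ((P * Pᵀ).diag = fun _ => 1) ∧
      (Pᵀ * P = Matrix.diagonal fun j => (m j : ℝ)) ∧
      (Matrix.fromBlocks (1 : Matrix (Fin k) (Fin k) ℝ) Pᵀ P (P * Pᵀ)).PosSemidef ∧
      (Matrix.fromBlocks (1 : Matrix (Fin n) (Fin n) ℝ) P Pᵀ (Pᵀ * P)).PosSemidef) ∧
    (∀ (P : Matrix (Fin n) (Fin k) ℝ) (X₁ : Matrix (Fin n) (Fin n) ℝ)
        (X₂ : Matrix (Fin k) (Fin k) ℝ),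
      (∀ i j, P i j = 0 ∨ P i j = 1) → X₁.IsSymm → X₂.IsSymm →
      (P.mulVec (fun _ => 1) = fun _ => 1) →
      (X₁.diag = fun _ => 1) →
      (X₂ = Matrix.diagonal fun j => (m j : ℝ)) →
      (Matrix.fromBlocks (1 : Matrix (Fin k) (Fin k) ℝ) Pᵀ P X₁).PosSemidef →
      (Matrix.fromBlocks (1 : Matrix (Fin n) (Fin n) ℝ) P Pᵀ X₂).PosSemidef →
      X₁ = P * Pᵀ ∧ X₂ = Pᵀ * P ∧
      (∀ i j, 0 ≤ P i j) ∧
      (Pᵀ.mulVec (fun _ => 1) = fun j => (m j : ℝ)) ∧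
      (Pᵀ * P = Matrix.diagonal fun j => (m j : ℝ)) ∧
      ((P * Pᵀ).diag = fun _ => 1)) := by
  constructor
  · -- Part (a)
    intro P h0 hcol hPtP hdiag
    -- orthogonality of columns entrywise
    have orth : ∀ (i : Fin n) (j j' : Fin k), j ≠ j' → P i j * P i j' = 0 := by
      intro i j j' hne
      have hsum : ∑ i', P i' j * P i' j' = 0 := by
        have := congrFun (congrFun hPtP j) j'
        rw [Matrix.mul_apply, Matrix.diagonal_apply_ne _ hne] at this
        simpa [Matrix.transpose_apply] using this
      have := (Finset.sum_eq_zero_iff_of_nonneg (fun i' _ => mul_nonneg (h0 i' j) (h0 i' j'))).mp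
        hsum i (Finset.mem_univ i)
      exact this
    have sqsum : ∀ i, ∑ j, P i j * P i j = 1 := by
      intro i
      have := congrFun hdiag i
      rw [Matrix.diag_apply, Matrix.mul_apply] at this
      simpa [Matrix.transpose_apply] using this
    have h01 : ∀ i j, P i j = 0 ∨ P i j = 1 := by
      intro i j
      by_cases hz : P i j = 0
      · exact Or.inl hz
      · right
        have hrest : ∀ j' ∈ Finset.univ, j' ≠ j → P i j' * P i j' = 0 := by
          intro j' _ hne
          have h1 : P i j * P i j' = 0 := orth i j j' (Ne.symm hne)
          have h2 : P i j' = 0 := by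
            rcases mul_eq_zero.mp h1 with h | h
            · exact absurd h hz
            · exact h
          rw [h2]; ring
        have : P i j * P i j = 1 := by
          rw [← sqsum i]
          exact (Finset.sum_eq_single j hrest (fun h => absurd (Finset.mem_univ j) h)).symm
        have hfac : (P i j - 1) * (P i j + 1) = 0 := by ring_nf; nlinarith [this]
        rcases mul_eq_zero.mp hfac with h | h
        · linarith
        · have := h0 i j; linarith
    have hidem : ∀ i j, P i j * P i j = P i j := by
      intro i j
      rcases h01 i j with h | h <;> rw [h] <;> ring
    have hrow : P.mulVec (fun _ => 1) = fun _ => 1 := by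
      funext i
      have : ∑ j, P i j * 1 = ∑ j, P i j * P i j := by
        apply Finset.sum_congr rfl
        intro j _; rw [mul_one, hidem]
      simp only [Matrix.mulVec, dotProduct]
      rw [this, sqsum i]
    refine ⟨h01, hrow, hdiag, hPtP, gramBlock P, ?_⟩
    have := gramBlock Pᵀ
    rwa [Matrix.transpose_transpose] at this
  · -- Part (b)
    intro P X₁ X₂ h01 hX₁s hX₂s hrow hd₁ hX₂ hPSD1 hPSD2
    have h0 : ∀ i j, 0 ≤ P i j := by
      intro i j; rcases h01 i j with h | h <;> rw [h] <;> norm_num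
    have hidem : ∀ i j, P i j * P i j = P i j := by
      intro i j; rcases h01 i j with h | h <;> rw [h] <;> ring
    have hrowsum : ∀ i, ∑ j, P i j = 1 := by
      intro i
      have := congrFun hrow i
      simpa [Matrix.mulVec, dotProduct] using this
    have orth : ∀ (i : Fin n) (j j' : Fin k), j ≠ j' → P i j * P i j' = 0 := by
      intro i j j' hne
      rcases h01 i j with h | h
      · rw [h]; ring
      rcases h01 i j' with h' | h'
      · rw [h']; ring
      exfalso
      have hsub : ({j, j'} : Finset (Fin k)) ⊆ Finset.univ := Finset.subset_univ _
      have h2 : (2:ℝ) ≤ ∑ l, P i l := by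
        have hpair : ∑ l ∈ ({j, j'} : Finset (Fin k)), P i l = 2 := by
          rw [Finset.sum_pair hne, h, h']; norm_num
        calc (2:ℝ) = ∑ l ∈ ({j, j'} : Finset (Fin k)), P i l := hpair.symm
          _ ≤ ∑ l, P i l := Finset.sum_le_sum_of_subset_of_nonneg hsub
              (fun l _ _ => h0 i l)
      rw [hrowsum i] at h2
      linarith
    set c : Fin k → ℝ := fun j => ∑ i, P i j with hc
    have hPtP : Pᵀ * P = Matrix.diagonal c := by
      ext j j'
      rw [Matrix.mul_apply]
      by_cases hne : j = j'
      · subst hne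
        rw [Matrix.diagonal_apply_eq]
        simp only [Matrix.transpose_apply]
        exact Finset.sum_congr rfl (fun i _ => hidem i j)
      · rw [Matrix.diagonal_apply_ne _ hne]
        exact Finset.sum_eq_zero (fun i _ => by
          rw [Matrix.transpose_apply]; exact orth i j j' hne)
    have hq2 := schurQuad P X₂ hPSD2
    have hle : ∀ j, c j ≤ (m j : ℝ) := by
      intro j
      have := hq2 (Pi.single j 1)
      rw [quadSingle] at this
      rw [Matrix.sub_apply, hX₂, hPtP, Matrix.diagonal_apply_eq, Matrix.diagonal_apply_eq] at this
      linarith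
    have hcsum : ∑ j, c j = (n : ℝ) := by
      simp only [hc]
      rw [Finset.sum_comm]
      rw [Finset.sum_congr rfl (fun i _ => hrowsum i)]
      simp
    have hmsum' : ∑ j, ((m j : ℝ)) = (n : ℝ) := by
      rw [← hmsum]; push_cast; ring
    have hcm : ∀ j, c j = (m j : ℝ) := by
      have hzero : ∑ j, ((m j : ℝ) - c j) = 0 := by
        rw [Finset.sum_sub_distrib, hmsum', hcsum]; ring
      intro j
      have := (Finset.sum_eq_zero_iff_of_nonneg
        (fun j' _ => by linarith [hle j'])).mp hzero j (Finset.mem_univ j)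
      linarith
    have hcfun : c = fun j => (m j : ℝ) := funext hcm
    have hPtP' : Pᵀ * P = Matrix.diagonal fun j => (m j : ℝ) := by rw [hPtP, hcfun]
    have hdiagPPt : (P * Pᵀ).diag = fun _ => 1 := by
      funext i
      rw [Matrix.diag_apply, Matrix.mul_apply]
      simp only [Matrix.transpose_apply]
      rw [Finset.sum_congr rfl (fun j _ => hidem i j)]
      exact hrowsum i
    have hcolsum : Pᵀ.mulVec (fun _ => 1) = fun j => (m j : ℝ) := by
      funext j
      simp only [Matrix.mulVec, dotProduct, Matrix.transpose_apply, mul_one]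
      exact hcm j
    -- X₁ = P * Pᵀ
    have hPSD1' : (Matrix.fromBlocks (1 : Matrix (Fin k) (Fin k) ℝ) Pᵀ Pᵀᵀ X₁).PosSemidef := by
      rwa [Matrix.transpose_transpose]
    have hq1 := schurQuad Pᵀ X₁ hPSD1'
    rw [Matrix.transpose_transpose] at hq1
    have hY : X₁ - P * Pᵀ = 0 := by
      apply psdZeroDiag
      · rw [Matrix.transpose_sub, hX₁s, Matrix.transpose_mul, Matrix.transpose_transpose]
      · exact hq1
      · intro i
        rw [Matrix.sub_apply]
        have h1 : X₁ i i = 1 := congrFun hd₁ i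
        have h2 : (P * Pᵀ) i i = 1 := congrFun hdiagPPt i
        rw [h1, h2]; ring
    have hX₁ : X₁ = P * Pᵀ := by
      have := sub_eq_zero.mp hY; exact this
    exact ⟨hX₁, by rw [hX₂, hPtP']; , h0, hcolsum, hPtP', hdiagPPt⟩
end

section
/- Let n, k, m be positive integers with n = mk. A symmetric matrix X ∈ {0,1}^{n×n} satisfies diag(X) = 1_n, X 1_n = m 1_n, and kX − J_n PSD if and only if the matrices X₁ := J_n − X and X₂ := X − I_n satisfy: (m−1)I_n − X₂ PSD, (k−1)I_n − X₁ + (k−1)X₂ PSD, I_n + X₁ + X₂ = J_n, X₁ has nonnegative entries, and X₂ has all entries in {0,1}. Consequently, for any symmetric nonnegative matrix D with associated Laplacian L := Diag(D1_n) − D, the semidefinite program minimizing (1/2)⟨L, X⟩ over the former set and the mixed-integer semidefinite program minimizing ⟨D, X₁⟩ over symmetric X₁, X₂ satisfying the latter constraints are equivalent formulations of the k-equipartition problem. -/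
open Matrix

/-- Feasibility for the BSDP formulation of the `k`-equipartition problem (`n = m k`):
`X ∈ {0,1}^{n×n}` symmetric, `diag X = 1_n`, `X 1_n = m 1_n` and `k X − J_n` PSD. -/
def kEPsdpFeasible (n k m : ℕ) (X : Matrix (Fin n) (Fin n) ℝ) : Prop :=
  X.IsSymm ∧ (∀ i j, X i j = 0 ∨ X i j = 1) ∧
  (X.diag = fun _ => 1) ∧
  (X.mulVec (fun _ => 1) = fun _ => (m : ℝ)) ∧
  ((k : ℝ) • X - allOnesM n).PosSemidef

/-- Feasibility for the association-scheme MISDP formulation of the `k`-equipartition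
problem: `X₁, X₂` symmetric, `(m−1) I_n − X₂` PSD, `(k−1) I_n − X₁ + (k−1) X₂` PSD,
`I_n + X₁ + X₂ = J_n`, `X₁ ≥ 0` entrywise, and `X₂ ∈ {0,1}^{n×n}`. -/
def kEPassocFeasible (n k m : ℕ) (X₁ X₂ : Matrix (Fin n) (Fin n) ℝ) : Prop :=
  X₁.IsSymm ∧ X₂.IsSymm ∧
  (((m : ℝ) - 1) • (1 : Matrix (Fin n) (Fin n) ℝ) - X₂).PosSemidef ∧
  (((k : ℝ) - 1) • (1 : Matrix (Fin n) (Fin n) ℝ) - X₁ + ((k : ℝ) - 1) • X₂).PosSemidef ∧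
  (1 : Matrix (Fin n) (Fin n) ℝ) + X₁ + X₂ = allOnesM n ∧
  (∀ i j, 0 ≤ X₁ i j) ∧
  (∀ i j, X₂ i j = 0 ∨ X₂ i j = 1)

variable {n : ℕ}

lemma psd_of_symm (M : Matrix (Fin n) (Fin n) ℝ) (hs : M.IsSymm)
    (h : ∀ x, 0 ≤ x ⬝ᵥ (M *ᵥ x)) : M.PosSemidef := by
  refine Matrix.PosSemidef.of_dotProduct_mulVec_nonneg ?_ fun x => by simpa using h x
  rw [Matrix.IsHermitian, conjTranspose_eq_transpose_of_trivial]
  exact hs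

lemma quad_sum (M : Matrix (Fin n) (Fin n) ℝ) (x : Fin n → ℝ) :
    x ⬝ᵥ (M *ᵥ x) = ∑ i, ∑ j, x i * M i j * x j := by
  simp [dotProduct, mulVec, Finset.mul_sum, mul_assoc]

lemma quad_perturb (M : Matrix (Fin n) (Fin n) ℝ) (i : Fin n) (t : ℝ) :
    (fun j => 1 + if j = i then t else 0) ⬝ᵥ (M *ᵥ (fun j => 1 + if j = i then t else 0)) =
    (∑ a, ∑ b, M a b) + t * (∑ b, M i b) + (∑ a, M a i) * t + t * M i i * t := by
  have hv : (fun j => 1 + if j = i then t else 0)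
      = (fun _ => (1:ℝ)) + t • (Pi.single i 1 : Fin n → ℝ) := by
    ext j; by_cases h : j = i <;> simp [Pi.single_apply, h]
  rw [hv]
  simp [dotProduct, mulVec, mul_add, add_mul, Finset.sum_add_distrib, Pi.single_apply,
    mul_ite, ite_mul, Finset.sum_ite_eq', Finset.mul_sum, Finset.sum_mul]
  ring

lemma lap_psd (X : Matrix (Fin n) (Fin n) ℝ) (c : ℝ) (hs : X.IsSymm)
    (hpos : ∀ i j, 0 ≤ X i j) (hrow : ∀ i, ∑ j, X i j = c) :
    (c • (1 : Matrix (Fin n) (Fin n) ℝ) - X).PosSemidef := by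
  have hsym : ∀ a b, X a b = X b a := fun a b => hs.apply b a
  have hcol : ∀ j, ∑ i, X i j = c := fun j => by
    rw [← hrow j]; exact Finset.sum_congr rfl fun a _ => hsym a j
  refine psd_of_symm _ ?_ ?_
  · rw [Matrix.IsSymm, transpose_sub, transpose_smul, transpose_one, hs]
  · intro x
    rw [quad_sum]
    have e1 : ∑ i, ∑ j, x i * (c • (1 : Matrix (Fin n) (Fin n) ℝ) - X) i j * x j
        = (∑ i, c * x i ^ 2) - ∑ i, ∑ j, x i * X i j * x j := by
      have h1 : ∀ i j : Fin n, x i * (c • (1 : Matrix (Fin n) (Fin n) ℝ) - X) i j * x j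
          = (if j = i then c * x i ^ 2 else 0) - x i * X i j * x j := by
        intro i j
        by_cases h : j = i
        · subst h; simp [Matrix.one_apply]; ring
        · simp [Matrix.one_apply, h, (Ne.symm h : i ≠ j)]
      simp_rw [h1, Finset.sum_sub_distrib, Finset.sum_ite_eq', Finset.mem_univ, if_true]
    rw [e1]
    have e2 : ∑ i, ∑ j, X i j * (x i - x j) ^ 2
        = 2 * ((∑ i, c * x i ^ 2) - ∑ i, ∑ j, x i * X i j * x j) := by
      have expand : ∀ i j : Fin n, X i j * (x i - x j) ^ 2
          = X i j * x i ^ 2 - 2 * (x i * X i j * x j) + X i j * x j ^ 2 := fun i j => by ring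
      have A : ∑ i, ∑ j, X i j * x i ^ 2 = ∑ i, c * x i ^ 2 := by
        refine Finset.sum_congr rfl fun i _ => ?_
        rw [← Finset.sum_mul, hrow i]
      have B : ∑ i : Fin n, ∑ j, X i j * x j ^ 2 = ∑ j, c * x j ^ 2 := by
        rw [Finset.sum_comm]
        refine Finset.sum_congr rfl fun j _ => ?_
        rw [← Finset.sum_mul, hcol j]
      simp_rw [expand, Finset.sum_add_distrib, Finset.sum_sub_distrib, ← Finset.mul_sum]
      rw [A, B]; simp_rw [← Finset.mul_sum]; ring
    have e3 : 0 ≤ ∑ i, ∑ j, X i j * (x i - x j) ^ 2 :=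
      Finset.sum_nonneg fun i _ => Finset.sum_nonneg fun j _ =>
        mul_nonneg (hpos i j) (sq_nonneg _)
    linarith [e2 ▸ e3]

lemma ones_quad (M : Matrix (Fin n) (Fin n) ℝ) :
    (fun _ => (1:ℝ)) ⬝ᵥ (M *ᵥ fun _ => 1) = ∑ a, ∑ b, M a b := by
  simp [dotProduct, mulVec]

lemma rowsum_eq {k m : ℕ} (hk : 0 < k) (hm : 0 < m) (hnmk : n = m * k)
    (X : Matrix (Fin n) (Fin n) ℝ) (hs : X.IsSymm) (hdiag : ∀ i, X i i = 1)
    (h1 : ((m:ℝ) • (1 : Matrix (Fin n) (Fin n) ℝ) - X).PosSemidef)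
    (h2 : ((k:ℝ) • X - allOnesM n).PosSemidef) :
    ∀ i, ∑ j, X i j = m := by
  have hsym : ∀ a b, X a b = X b a := fun a b => hs.apply b a
  have hmpos : (0:ℝ) < m := by exact_mod_cast hm
  have hkpos : (0:ℝ) < k := by exact_mod_cast hk
  have hn : (n:ℝ) = m * k := by exact_mod_cast hnmk
  set S := ∑ a, ∑ b, X a b with hS
  have hM1 : ∀ a b, ((m:ℝ) • (1 : Matrix (Fin n) (Fin n) ℝ) - X) a b
      = (if a = b then (m:ℝ) else 0) - X a b := by
    intro a b; by_cases h : a = b <;> simp [Matrix.one_apply, h]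
  have hM1sum : ∑ a, ∑ b, ((m:ℝ) • (1 : Matrix (Fin n) (Fin n) ℝ) - X) a b = (m:ℝ) * n - S := by
    simp_rw [hM1, Finset.sum_sub_distrib, Finset.sum_ite_eq, Finset.mem_univ, if_true,
      Finset.sum_const, Finset.card_univ, Fintype.card_fin, nsmul_eq_mul]
    ring
  have q1 : (0:ℝ) ≤ (m:ℝ) * n - S := by
    have h := h1.dotProduct_mulVec_nonneg (fun _ => 1)
    rw [show star (fun _ => (1:ℝ)) = (fun _ : Fin n => (1:ℝ)) by funext; simp] at h
    rwa [ones_quad, hM1sum] at h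
  have q2 : (0:ℝ) ≤ (k:ℝ) * S - n * n := by
    have h := h2.dotProduct_mulVec_nonneg (fun _ => 1)
    rw [show star (fun _ => (1:ℝ)) = (fun _ : Fin n => (1:ℝ)) by funext; simp] at h
    rw [ones_quad] at h
    have e : ∑ a, ∑ b, ((k:ℝ) • X - allOnesM n) a b = (k:ℝ) * S - n * n := by
      simp_rw [Matrix.sub_apply, Matrix.smul_apply, smul_eq_mul, allOnesM, Matrix.of_apply,
        Finset.sum_sub_distrib, ← Finset.mul_sum, Finset.sum_const, Finset.card_univ,
        Fintype.card_fin, nsmul_eq_mul]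
      ring
    rwa [e] at h
  have hSval : S = (m:ℝ) * n := by nlinarith
  intro i
  set r := ∑ j, X i j with hr
  set t := (r - m) / m with ht
  have htm : t * m = r - m := div_mul_cancel₀ _ (ne_of_gt hmpos)
  have hq : (0:ℝ) ≤ (fun j => 1 + if j = i then t else 0) ⬝ᵥ
      (((m:ℝ) • (1 : Matrix (Fin n) (Fin n) ℝ) - X) *ᵥ (fun j => 1 + if j = i then t else 0)) := by
    simpa using h1.dotProduct_mulVec_nonneg (fun j => 1 + if j = i then t else 0)
  rw [quad_perturb] at hq
  have hrow : ∑ b, ((m:ℝ) • (1 : Matrix (Fin n) (Fin n) ℝ) - X) i b = (m:ℝ) - r := by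
    simp_rw [hM1, Finset.sum_sub_distrib, Finset.sum_ite_eq, Finset.mem_univ, if_true]; rfl
  have hcol : ∑ a, ((m:ℝ) • (1 : Matrix (Fin n) (Fin n) ℝ) - X) a i = (m:ℝ) - r := by
    simp_rw [hM1, Finset.sum_sub_distrib, Finset.sum_ite_eq', Finset.mem_univ, if_true]
    congr 1
    rw [hr]
    exact Finset.sum_congr rfl fun a _ => hsym a i
  have hii : ((m:ℝ) • (1 : Matrix (Fin n) (Fin n) ℝ) - X) i i = (m:ℝ) - 1 := by
    rw [hM1, if_pos rfl, hdiag i]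
  rw [hM1sum, hSval, hrow, hcol, hii] at hq
  have e : t * ((m:ℝ) - r) + ((m:ℝ) - r) * t + t * ((m:ℝ) - 1) * t
      = -((r - m)^2 * ((m:ℝ) + 1)) / m^2 := by
    rw [ht]; field_simp; ring
  have hq' : (0:ℝ) ≤ -((r - m)^2 * ((m:ℝ) + 1)) / m^2 := by linarith
  have hm2 : (0:ℝ) < m^2 := by positivity
  have key : (r - m)^2 * ((m:ℝ) + 1) ≤ 0 := by
    have h5 : 0 ≤ (-((r - m)^2 * ((m:ℝ) + 1)) / m^2) * m^2 :=
      mul_nonneg hq' (le_of_lt hm2)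
    rw [div_mul_cancel₀ _ (ne_of_gt hm2)] at h5
    linarith
  have h0 : (r - m)^2 = 0 := by nlinarith [sq_nonneg (r - m)]
  have := pow_eq_zero_iff (n := 2) (by norm_num) |>.mp h0
  linarith [sub_eq_zero.mp this]

lemma idA (k : ℕ) (X : Matrix (Fin n) (Fin n) ℝ) :
    ((k:ℝ) - 1) • (1 : Matrix (Fin n) (Fin n) ℝ) - (allOnesM n - X) + ((k:ℝ) - 1) • (X - 1)
      = (k:ℝ) • X - allOnesM n := by
  ext i j; by_cases h : i = j <;> simp [allOnesM, Matrix.one_apply, h] <;> ring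

lemma idA' (k : ℕ) (X₂ : Matrix (Fin n) (Fin n) ℝ) :
    ((k:ℝ) - 1) • (1 : Matrix (Fin n) (Fin n) ℝ) - (allOnesM n - (X₂ + 1)) + ((k:ℝ) - 1) • X₂
      = (k:ℝ) • (X₂ + 1) - allOnesM n := by
  ext i j; by_cases h : i = j <;> simp [allOnesM, Matrix.one_apply, h] <;> ring

lemma idB (m : ℕ) (X : Matrix (Fin n) (Fin n) ℝ) :
    ((m:ℝ) - 1) • (1 : Matrix (Fin n) (Fin n) ℝ) - (X - 1) = (m:ℝ) • 1 - X := by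
  ext i j; by_cases h : i = j <;> simp [Matrix.one_apply, h] <;> try ring

lemma idB' (m : ℕ) (X₂ : Matrix (Fin n) (Fin n) ℝ) :
    ((m:ℝ) - 1) • (1 : Matrix (Fin n) (Fin n) ℝ) - X₂ = (m:ℝ) • 1 - (X₂ + 1) := by
  ext i j; by_cases h : i = j <;> simp [Matrix.one_apply, h] <;> try ring

lemma allOnes_symm : (allOnesM n)ᵀ = allOnesM n := by ext i j; simp [allOnesM]

lemma traceForm (A B : Matrix (Fin n) (Fin n) ℝ) :
    (Aᵀ * B).trace = ∑ i, ∑ j, A i j * B i j := by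
  rw [Matrix.trace]
  simp only [Matrix.diag, Matrix.mul_apply, Matrix.transpose_apply]
  exact Finset.sum_comm

lemma sdp_to_misdp {k m : ℕ} (X : Matrix (Fin n) (Fin n) ℝ)
    (h : kEPsdpFeasible n k m X) :
    kEPassocFeasible n k m (allOnesM n - X) (X - 1) := by
  obtain ⟨hs, h01, hdiag, hrowv, hpsd⟩ := h
  have hdiag' : ∀ i, X i i = 1 := fun i => congrFun hdiag i
  have hrs : ∀ i, ∑ j, X i j = m := fun i => by
    simpa [mulVec, dotProduct] using congrFun hrowv i
  refine ⟨?_, ?_, ?_, ?_, ?_, ?_, ?_⟩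
  · rw [Matrix.IsSymm, transpose_sub, hs, allOnes_symm]
  · rw [Matrix.IsSymm, transpose_sub, transpose_one, hs]
  · rw [idB]
    exact lap_psd X m hs (fun i j => by rcases h01 i j with h|h <;> simp [h]) hrs
  · rw [idA]; exact hpsd
  · abel
  · intro i j; rcases h01 i j with h|h <;> simp [allOnesM, h]
  · intro i j
    by_cases hij : i = j
    · subst hij; left; simp [Matrix.one_apply, hdiag' i]
    · rcases h01 i j with h|h
      · left; simp [Matrix.one_apply, hij, h]
      · right; simp [Matrix.one_apply, hij, h]

lemma misdp_back {k m : ℕ} (hk : 0 < k) (hm : 0 < m) (hnmk : n = m * k)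
    (X : Matrix (Fin n) (Fin n) ℝ) (hs : X.IsSymm) (h01 : ∀ i j, X i j = 0 ∨ X i j = 1)
    (h : kEPassocFeasible n k m (allOnesM n - X) (X - 1)) :
    kEPsdpFeasible n k m X := by
  obtain ⟨_, _, hp1, hp2, _, _, h01₂⟩ := h
  rw [idA] at hp2
  rw [idB] at hp1
  have hdiag' : ∀ i, X i i = 1 := by
    intro i
    rcases h01 i i with h|h
    · exfalso; rcases h01₂ i i with h2|h2 <;> simp [Matrix.one_apply, h] at h2 <;> linarith
    · exact h
  have hrs := rowsum_eq hk hm hnmk X hs hdiag' hp1 hp2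
  refine ⟨hs, h01, funext fun i => hdiag' i, ?_, hp2⟩
  funext i
  simpa [mulVec, dotProduct] using hrs i

lemma misdp_to_sdp {k m : ℕ} (hk : 0 < k) (hm : 0 < m) (hnmk : n = m * k)
    (X₁ X₂ : Matrix (Fin n) (Fin n) ℝ) (h : kEPassocFeasible n k m X₁ X₂) :
    ∃ X : Matrix (Fin n) (Fin n) ℝ, kEPsdpFeasible n k m X ∧
      X₁ = allOnesM n - X ∧ X₂ = X - 1 := by
  obtain ⟨hs1, hs2, hp1, hp2, hsum, hpos1, h01⟩ := h
  have hd2 : ∀ i, X₂ i i = 0 := by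
    intro i
    have hsi := congrFun (congrFun hsum i) i
    simp [allOnesM, Matrix.one_apply] at hsi
    have h1 := hpos1 i i
    rcases h01 i i with h|h <;> linarith
  have hX1 : X₁ = allOnesM n - (X₂ + 1) := by rw [← hsum]; abel
  refine ⟨X₂ + 1, ⟨?_, ?_, ?_, ?_, ?_⟩, hX1, by abel⟩
  · rw [Matrix.IsSymm, transpose_add, transpose_one, hs2]
  · intro i j
    by_cases hij : i = j
    · subst hij; right; simp [Matrix.one_apply, hd2]
    · rcases h01 i j with h|h
      · left; simp [Matrix.one_apply, hij, h]
      · right; simp [Matrix.one_apply, hij, h]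
  · funext i; simp [Matrix.diag, Matrix.one_apply, hd2]
  · rw [idB'] at hp1
    rw [hX1, idA'] at hp2
    have hsymX : (X₂ + 1).IsSymm := by rw [Matrix.IsSymm, transpose_add, transpose_one, hs2]
    have hdiagX : ∀ i, (X₂ + 1) i i = 1 := fun i => by simp [Matrix.one_apply, hd2]
    have hrs := rowsum_eq hk hm hnmk (X₂ + 1) hsymX hdiagX hp1 hp2
    funext i
    simpa [mulVec, dotProduct] using hrs i
  · rw [idB'] at hp1
    rw [hX1, idA'] at hp2
    exact hp2

lemma obj_eq (D X : Matrix (Fin n) (Fin n) ℝ) (hdiag : ∀ i, X i i = 1) :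
    ((Matrix.diagonal (D.mulVec fun _ => 1) - D)ᵀ * X).trace
      = (Dᵀ * (allOnesM n - X)).trace := by
  rw [traceForm, traceForm]
  have e1 : ∀ i j : Fin n, (Matrix.diagonal (D.mulVec fun _ => 1) - D) i j
      = (if i = j then ∑ l, D i l else 0) - D i j := by
    intro i j
    by_cases h : i = j <;> simp [Matrix.diagonal_apply, h, mulVec, dotProduct]
  have e2 : ∀ i j : Fin n, D i j * (allOnesM n - X) i j = D i j - D i j * X i j := by
    intro i j; simp [allOnesM]; ring
  simp_rw [e1, e2, sub_mul, ite_mul, zero_mul, Finset.sum_sub_distrib, Finset.sum_ite_eq,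
    Finset.mem_univ, if_true]
  congr 1
  refine Finset.sum_congr rfl fun i _ => ?_
  rw [hdiag i, mul_one]

/-- For `n = m k`: a symmetric `{0,1}` matrix `X` satisfies `diag X = 1_n`, `X 1_n = m 1_n`
and `k X − J_n ⪰ 0` iff the pair `X₁ := J_n − X`, `X₂ := X − I_n` is feasible for the
association-scheme MISDP; every MISDP-feasible pair arises in this way; and, for every
symmetric nonnegative weight matrix `D` with Laplacian `L = Diag(D 1_n) − D`, a feasible
`X` minimizes `(1/2)⟨L, ·⟩` over the BSDP iff its image minimizes `⟨D, ·⟩` over the MISDP,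
i.e. the two programs are equivalent formulations of the `k`-equipartition problem. -/
theorem stmt19 (n k m : ℕ) (hk : 0 < k) (hm : 0 < m) (hnmk : n = m * k) :
    (∀ X : Matrix (Fin n) (Fin n) ℝ, X.IsSymm → (∀ i j, X i j = 0 ∨ X i j = 1) →
      (kEPsdpFeasible n k m X ↔
        kEPassocFeasible n k m (allOnesM n - X) (X - 1))) ∧
    (∀ X₁ X₂ : Matrix (Fin n) (Fin n) ℝ, kEPassocFeasible n k m X₁ X₂ →
      ∃ X : Matrix (Fin n) (Fin n) ℝ, kEPsdpFeasible n k m X ∧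
        X₁ = allOnesM n - X ∧ X₂ = X - 1) ∧
    (∀ D : Matrix (Fin n) (Fin n) ℝ, D.IsSymm → (∀ i j, 0 ≤ D i j) →
      ∀ X : Matrix (Fin n) (Fin n) ℝ, kEPsdpFeasible n k m X →
        ((∀ X' : Matrix (Fin n) (Fin n) ℝ, kEPsdpFeasible n k m X' →
            (1 / 2 : ℝ) * (((Matrix.diagonal (D.mulVec fun _ => 1) - D)ᵀ) * X).trace ≤
            (1 / 2 : ℝ) * (((Matrix.diagonal (D.mulVec fun _ => 1) - D)ᵀ) * X').trace) ↔
          (∀ Y₁ Y₂ : Matrix (Fin n) (Fin n) ℝ, kEPassocFeasible n k m Y₁ Y₂ →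
            (Dᵀ * (allOnesM n - X)).trace ≤ (Dᵀ * Y₁).trace))) := by
  refine ⟨fun X hs h01 => ⟨fun h => sdp_to_misdp X h, fun h => misdp_back hk hm hnmk X hs h01 h⟩,
    fun X₁ X₂ h => misdp_to_sdp hk hm hnmk X₁ X₂ h, ?_⟩
  intro D hD hDpos X hX
  have hXd : ∀ i, X i i = 1 := fun i => congrFun hX.2.2.1 i
  constructor
  · intro hmin Y₁ Y₂ hY
    obtain ⟨X', hX', hY₁, hY₂⟩ := misdp_to_sdp hk hm hnmk Y₁ Y₂ hY
    have h := hmin X' hX'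
    have hX'd : ∀ i, X' i i = 1 := fun i => congrFun hX'.2.2.1 i
    rw [obj_eq D X hXd, obj_eq D X' hX'd] at h
    rw [hY₁]
    linarith
  · intro hmin X' hX'
    have h := hmin _ _ (sdp_to_misdp X' hX')
    rw [obj_eq D X hXd, obj_eq D X' (fun i => congrFun hX'.2.2.1 i)]
    linarith
end
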